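/- arXiv:0801.3797 — 7 statements merged into one kernel-verified Lean document; each statement's English description precedes it below -/
import Mathlib

section
/- (Basic Lemma.) Let 𝒜 and ℬ be finite nonempty types, let K be a finite nonempty index set with finite nonempty types (C_k)_{k∈K}, and set 𝒞 := Π_{k∈K} C_k. Let Ψ : 𝒜 × ℬ × 𝒞 → ℝ be nonnegative and suppose that for every c ∈ 𝒞, ∑_{a∈𝒜} ∑_{b∈ℬ} Ψ(a,b,c) > 0. For each nonzero measure φ on 𝒞 let m_φ : 𝒜 → ℝ denote the normalization of the function a ↦ ∑_{b∈ℬ} ∑_{c∈𝒞} Ψ(a,b,c) φ(c). Then the smallest bounding box of { m_φ : φ a nonzero measure on 𝒞 } equals the smallest bounding box of { m_φ : φ a nonzero factorized measure on 𝒞 }; that is, for every a ∈ 𝒜, the supremum of m_φ(a) over all nonzero measures φ on 𝒞 equals the supremum of m_φ(a) over all nonzero factorized measures φ on 𝒞, and likewise for the infimum. -/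
/-- The Basic Lemma: the smallest bounding box of the set of normalized marginals
on `𝒜` obtained from arbitrary nonzero measures on `𝒞` equals the one obtained
from nonzero factorized measures on `𝒞`. -/
theorem stmt_7 {𝒜 ℬ : Type*} [Fintype 𝒜] [Nonempty 𝒜] [Fintype ℬ] [Nonempty ℬ]
    {K : Type*} [Fintype K] [DecidableEq K] [Nonempty K]
    (C : K → Type*) [∀ k, Fintype (C k)] [∀ k, Nonempty (C k)]
    (Ψ : 𝒜 × ℬ × (∀ k, C k) → ℝ)
    (hΨ : ∀ z, 0 ≤ Ψ z)
    (hpos : ∀ c : ∀ k, C k, 0 < ∑ a, ∑ b, Ψ (a, b, c)) :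
    ∀ a : 𝒜,
      (sSup {r : ℝ | ∃ φ : (∀ k, C k) → ℝ, (∀ c, 0 ≤ φ c) ∧ (∃ c, 0 < φ c) ∧
            r = (∑ b, ∑ c, Ψ (a, b, c) * φ c)
                / ∑ a', ∑ b, ∑ c, Ψ (a', b, c) * φ c}
        = sSup {r : ℝ | ∃ φ : (∀ k, C k) → ℝ,
            (∃ g : ∀ k, C k → ℝ, (∀ k ck, 0 ≤ g k ck) ∧ φ = fun c => ∏ k, g k (c k)) ∧
            (∃ c, 0 < φ c) ∧
            r = (∑ b, ∑ c, Ψ (a, b, c) * φ c)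
                / ∑ a', ∑ b, ∑ c, Ψ (a', b, c) * φ c}) ∧
      (sInf {r : ℝ | ∃ φ : (∀ k, C k) → ℝ, (∀ c, 0 ≤ φ c) ∧ (∃ c, 0 < φ c) ∧
            r = (∑ b, ∑ c, Ψ (a, b, c) * φ c)
                / ∑ a', ∑ b, ∑ c, Ψ (a', b, c) * φ c}
        = sInf {r : ℝ | ∃ φ : (∀ k, C k) → ℝ,
            (∃ g : ∀ k, C k → ℝ, (∀ k ck, 0 ≤ g k ck) ∧ φ = fun c => ∏ k, g k (c k)) ∧
            (∃ c, 0 < φ c) ∧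
            r = (∑ b, ∑ c, Ψ (a, b, c) * φ c)
                / ∑ a', ∑ b, ∑ c, Ψ (a', b, c) * φ c}) := by
  classical
  have hNnn : ∀ (a : 𝒜) (c : ∀ k, C k), 0 ≤ ∑ b, Ψ (a, b, c) :=
    fun a c => Finset.sum_nonneg fun b _ => hΨ _
  set N : 𝒜 → (∀ k, C k) → ℝ := fun a c => ∑ b, Ψ (a, b, c) with hN
  set D : (∀ k, C k) → ℝ := fun c => ∑ a', ∑ b, Ψ (a', b, c) with hD
  have hDpos : ∀ c, 0 < D c := hpos
  have hswap : ∀ (a : 𝒜) (φ : (∀ k, C k) → ℝ),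
      (∑ b, ∑ c, Ψ (a, b, c) * φ c) = ∑ c, N a c * φ c := by
    intro a φ
    rw [Finset.sum_comm]
    exact Finset.sum_congr rfl fun c _ => (Finset.sum_mul ..).symm
  have hswapD : ∀ (φ : (∀ k, C k) → ℝ),
      (∑ a', ∑ b, ∑ c, Ψ (a', b, c) * φ c) = ∑ c, D c * φ c := by
    intro φ
    calc (∑ a', ∑ b, ∑ c, Ψ (a', b, c) * φ c)
        = ∑ a', ∑ c, N a' c * φ c := Finset.sum_congr rfl fun a' _ => hswap a' φ
      _ = ∑ c, ∑ a', N a' c * φ c := Finset.sum_comm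
      _ = ∑ c, D c * φ c := Finset.sum_congr rfl fun c _ => (Finset.sum_mul ..).symm
  have hden : ∀ (φ : (∀ k, C k) → ℝ), (∀ c, 0 ≤ φ c) → (∃ c, 0 < φ c) →
      0 < ∑ c, D c * φ c := by
    intro φ h0 ⟨c₀, hc₀⟩
    refine Finset.sum_pos' (fun c _ => mul_nonneg (hDpos c).le (h0 c))
      ⟨c₀, Finset.mem_univ _, mul_pos (hDpos c₀) hc₀⟩
  intro a
  set S : Set ℝ := {r : ℝ | ∃ φ : (∀ k, C k) → ℝ, (∀ c, 0 ≤ φ c) ∧ (∃ c, 0 < φ c) ∧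
            r = (∑ b, ∑ c, Ψ (a, b, c) * φ c)
                / ∑ a', ∑ b, ∑ c, Ψ (a', b, c) * φ c} with hS
  set T : Set ℝ := {r : ℝ | ∃ φ : (∀ k, C k) → ℝ,
            (∃ g : ∀ k, C k → ℝ, (∀ k ck, 0 ≤ g k ck) ∧ φ = fun c => ∏ k, g k (c k)) ∧
            (∃ c, 0 < φ c) ∧
            r = (∑ b, ∑ c, Ψ (a, b, c) * φ c)
                / ∑ a', ∑ b, ∑ c, Ψ (a', b, c) * φ c} with hT
  have hTS : T ⊆ S := by
    rintro r ⟨φ, ⟨g, hg, rfl⟩, hnz, hr⟩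
    exact ⟨_, fun c => Finset.prod_nonneg fun k _ => hg k _, hnz, hr⟩
  -- point masses are in T
  have hdelta : ∀ c₀ : ∀ k, C k, N a c₀ / D c₀ ∈ T := by
    intro c₀
    refine ⟨fun c => if c = c₀ then 1 else 0, ⟨fun k x => if x = c₀ k then 1 else 0,
      fun k x => by positivity, ?_⟩, ⟨c₀, by simp⟩, ?_⟩
    · funext c
      by_cases h : c = c₀
      · subst h; simp
      · rw [if_neg h]
        obtain ⟨k, hk⟩ := Function.ne_iff.mp h
        exact (Finset.prod_eq_zero (Finset.mem_univ k)
          (by rw [if_neg hk] : (if c k = c₀ k then (1:ℝ) else 0) = 0)).symm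
    · rw [hswap, hswapD]
      simp [mul_ite, Finset.sum_ite_eq']
  -- bounds via extreme ratios
  have hub := Finset.exists_mem_eq_sup' (Finset.univ_nonempty (α := ∀ k, C k))
    (fun c => N a c / D c)
  have hlb := Finset.exists_mem_eq_inf' (Finset.univ_nonempty (α := ∀ k, C k))
    (fun c => N a c / D c)
  obtain ⟨cM, -, hcM⟩ := hub
  obtain ⟨cm, -, hcm⟩ := hlb
  set M : ℝ := N a cM / D cM with hM
  set m : ℝ := N a cm / D cm with hm
  have hSub : ∀ r ∈ S, r ≤ M := by
    rintro r ⟨φ, h0, hnz, rfl⟩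
    rw [hswap, hswapD, div_le_iff₀ (hden φ h0 hnz)]
    calc ∑ c, N a c * φ c ≤ ∑ c, (M * D c) * φ c := by
          refine Finset.sum_le_sum fun c _ => mul_le_mul_of_nonneg_right ?_ (h0 c)
          rw [← div_le_iff₀ (hDpos c)]
          exact hcM ▸ Finset.le_sup' (fun c => N a c / D c) (Finset.mem_univ c)
      _ = M * ∑ c, D c * φ c := by
          rw [Finset.mul_sum]; exact Finset.sum_congr rfl fun c _ => by ring
  have hSlb : ∀ r ∈ S, m ≤ r := by
    rintro r ⟨φ, h0, hnz, rfl⟩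
    rw [hswap, hswapD, le_div_iff₀ (hden φ h0 hnz)]
    calc m * ∑ c, D c * φ c = ∑ c, (m * D c) * φ c := by
          rw [Finset.mul_sum]; exact Finset.sum_congr rfl fun c _ => by ring
      _ ≤ ∑ c, N a c * φ c := by
          refine Finset.sum_le_sum fun c _ => mul_le_mul_of_nonneg_right ?_ (h0 c)
          rw [← le_div_iff₀ (hDpos c)]
          exact hcm ▸ Finset.inf'_le (fun c => N a c / D c) (Finset.mem_univ c)
  have hMT : M ∈ T := hdelta cM
  have hmT : m ∈ T := hdelta cm
  have hTne : T.Nonempty := ⟨M, hMT⟩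
  have hSne : S.Nonempty := ⟨M, hTS hMT⟩
  have hbddS : BddAbove S := ⟨M, hSub⟩
  have hbddT : BddAbove T := ⟨M, fun r hr => hSub r (hTS hr)⟩
  have hbddSb : BddBelow S := ⟨m, hSlb⟩
  have hbddTb : BddBelow T := ⟨m, fun r hr => hSlb r (hTS hr)⟩
  constructor
  · refine le_antisymm (csSup_le hSne fun r hr => (hSub r hr).trans (le_csSup hbddT hMT))
      (csSup_le_csSup hbddS hTne hTS)
  · refine le_antisymm (csInf_le_csInf hbddSb hTne hTS)
      (le_csInf hSne fun r hr => (csInf_le hbddTb hmT).trans (hSlb r hr))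
end

section
/- Let X be a finite nonempty type, let L be a finite nonempty index set with finite nonempty types (X_l)_{l∈L}, and let ψ : X × Π_{l∈L} X_l → ℝ be nonnegative. For each l ∈ L let S_l be a finite set of measures on X_l, and suppose that for every choice (s_l)_{l∈L} with s_l ∈ S_l, ∑_{x∈X} ∑_{y ∈ Π_l X_l} ψ(x,y) ∏_{l∈L} s_l(y_l) > 0. For a choice (φ_l)_{l∈L} of measures φ_l on X_l, let m_{(φ_l)} denote the normalization of the function x ↦ ∑_{y} ψ(x,y) ∏_{l∈L} φ_l(y_l). Then for every x ∈ X, the supremum of m_{(φ_l)}(x) over all choices with φ_l ∈ convexHull(S_l) for each l equals the supremum of m_{(s_l)}(x) over all choices with s_l ∈ S_l for each l, and likewise for the infimum. -/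
/-!
Both the numerator and the denominator of the normalized marginal are multilinear in
`(φ_l)_l`, so each point of `∏_l convexHull (S_l)` maps to a point of the convex cone
`{(a, b) | 0 < b, d * b ≤ a ≤ c * b}` in the plane as soon as every vertex `(s_l)_l` does;
taking `c` and `d` to be the largest and smallest ratio over the finitely many vertices
gives the claim.
-/

open Function

namespace MultilinearMap

section Convex

variable {𝕜 ι F : Type*} [CommSemiring 𝕜] [PartialOrder 𝕜]
  {E : ι → Type*} [∀ i, AddCommMonoid (E i)] [∀ i, Module 𝕜 (E i)]
  [AddCommMonoid F] [Module 𝕜 F]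

theorem mem_of_forall_mem_convexHull [Finite ι] (f : MultilinearMap 𝕜 E F)
    {S : ∀ i, Set (E i)} {C : Set F} (hC : Convex 𝕜 C)
    (hS : ∀ s : ∀ i, E i, (∀ i, s i ∈ S i) → f s ∈ C)
    {φ : ∀ i, E i} (hφ : ∀ i, φ i ∈ convexHull 𝕜 (S i)) : f φ ∈ C := by
  classical
  have : Fintype ι := Fintype.ofFinite ι
  -- Move the coordinates in `t` into the hulls one at a time: `f` is linear in each slot.
  suffices key : ∀ t : Finset ι, ∀ φ : ∀ i, E i, (∀ i ∈ t, φ i ∈ convexHull 𝕜 (S i)) →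
      (∀ i ∉ t, φ i ∈ S i) → f φ ∈ C from
    key Finset.univ φ (fun i _ => hφ i) (fun i hi => absurd (Finset.mem_univ i) hi)
  intro t
  induction t using Finset.induction_on with
  | empty => exact fun φ _ hout => hS φ fun i => hout i (Finset.notMem_empty i)
  | insert a t ha ih =>
    intro φ hhull hout
    have hslice : S a ⊆ f.toLinearMap φ a ⁻¹' C := by
      intro v hv
      refine ih (update φ a v) (fun i hi => ?_) (fun i hi => ?_)
      · rw [update_of_ne (ne_of_mem_of_not_mem hi ha)]
        exact hhull i (Finset.mem_insert_of_mem hi)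
      · rcases eq_or_ne i a with rfl | hia
        · rwa [update_self]
        · rw [update_of_ne hia]
          exact hout i (by simp [hia, hi])
    simpa using
      convexHull_min hslice (hC.linear_preimage _) (hhull a (Finset.mem_insert_self a t))

end Convex

section Ratio

variable {𝕜 ι : Type*} [Field 𝕜] [LinearOrder 𝕜] [IsStrictOrderedRing 𝕜]
  {E : ι → Type*} [∀ i, AddCommGroup (E i)] [∀ i, Module 𝕜 (E i)]

theorem div_le_of_mem_convexHull [Finite ι] (A B : MultilinearMap 𝕜 E 𝕜)
    {S : ∀ i, Set (E i)} {c : 𝕜} (hB : ∀ s : ∀ i, E i, (∀ i, s i ∈ S i) → 0 < B s)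
    (hc : ∀ s : ∀ i, E i, (∀ i, s i ∈ S i) → A s / B s ≤ c)
    {φ : ∀ i, E i} (hφ : ∀ i, φ i ∈ convexHull 𝕜 (S i)) : A φ / B φ ≤ c := by
  have hcone : Convex 𝕜 {p : 𝕜 × 𝕜 | 0 < p.2 ∧ p.1 ≤ c * p.2} := by
    rintro p ⟨hp₂, hp₁⟩ q ⟨hq₂, hq₁⟩ a b ha hb hab
    simp only [Set.mem_ofPred_eq, Prod.fst_add, Prod.snd_add, Prod.smul_fst, Prod.smul_snd,
      smul_eq_mul]
    constructor <;> nlinarith [mul_nonneg ha hp₂.le, mul_nonneg hb hq₂.le, mul_pos hp₂ hq₂]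
  have := (A.prod B).mem_of_forall_mem_convexHull hcone
    (fun s hs => ⟨hB s hs, (div_le_iff₀ (hB s hs)).1 (hc s hs)⟩) hφ
  exact (div_le_iff₀ this.1).2 this.2

variable [Fintype ι] [DecidableEq ι]

theorem exists_div_ge_of_mem_convexHull (A B : MultilinearMap 𝕜 E 𝕜)
    {S : ∀ i, Finset (E i)} (hB : ∀ s : ∀ i, E i, (∀ i, s i ∈ S i) → 0 < B s)
    {φ : ∀ i, E i} (hφ : ∀ i, φ i ∈ convexHull 𝕜 (S i : Set (E i))) :
    ∃ s : ∀ i, E i, (∀ i, s i ∈ S i) ∧ A φ / B φ ≤ A s / B s := by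
  have hne : (Fintype.piFinset S).Nonempty := Fintype.piFinset_nonempty.2 fun i =>
    Finset.coe_nonempty.1 <| convexHull_nonempty_iff.1 ⟨φ i, hφ i⟩
  obtain ⟨s, hs, hmax⟩ := (Fintype.piFinset S).exists_max_image (fun s => A s / B s) hne
  exact ⟨s, Fintype.mem_piFinset.1 hs, div_le_of_mem_convexHull A B hB
    (fun s' hs' => hmax s' (Fintype.mem_piFinset.2 hs')) hφ⟩

theorem exists_div_le_of_mem_convexHull (A B : MultilinearMap 𝕜 E 𝕜)
    {S : ∀ i, Finset (E i)} (hB : ∀ s : ∀ i, E i, (∀ i, s i ∈ S i) → 0 < B s)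
    {φ : ∀ i, E i} (hφ : ∀ i, φ i ∈ convexHull 𝕜 (S i : Set (E i))) :
    ∃ s : ∀ i, E i, (∀ i, s i ∈ S i) ∧ A s / B s ≤ A φ / B φ := by
  obtain ⟨s, hs, hle⟩ := exists_div_ge_of_mem_convexHull (-A) B hB hφ
  refine ⟨s, hs, ?_⟩
  simpa only [neg_apply, neg_div, neg_le_neg_iff] using hle

end Ratio

variable {R L : Type*} [CommSemiring R] [Fintype L] [DecidableEq L]
  {Xl : L → Type*} [∀ l, Fintype (Xl l)]

def tensorPairing (c : (∀ l, Xl l) → R) : MultilinearMap R (fun l => Xl l → R) R :=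
  ∑ y, c y • (MultilinearMap.mkPiAlgebra R L R).compLinearMap fun l => LinearMap.proj (y l)

theorem tensorPairing_apply (c : (∀ l, Xl l) → R) (φ : ∀ l, Xl l → R) :
    tensorPairing c φ = ∑ y, c y * ∏ l, φ l (y l) := by
  simp [tensorPairing]

end MultilinearMap

theorem stmt_8_general {X : Type*} [Fintype X]
    {L : Type*} [Fintype L] [DecidableEq L]
    (Xl : L → Type*) [∀ l, Fintype (Xl l)]
    (ψ : X × (∀ l, Xl l) → ℝ)
    (S : ∀ l, Finset (Xl l → ℝ))
    (hpos : ∀ s : ∀ l, Xl l → ℝ, (∀ l, s l ∈ S l) →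
      0 < ∑ x, ∑ y, ψ (x, y) * ∏ l, s l (y l)) :
    ∀ x : X,
      (sSup {r : ℝ | ∃ φ : ∀ l, Xl l → ℝ,
            (∀ l, φ l ∈ convexHull ℝ ((S l : Set (Xl l → ℝ)))) ∧
            r = (∑ y, ψ (x, y) * ∏ l, φ l (y l))
                / ∑ x', ∑ y, ψ (x', y) * ∏ l, φ l (y l)}
        = sSup {r : ℝ | ∃ s : ∀ l, Xl l → ℝ, (∀ l, s l ∈ S l) ∧
            r = (∑ y, ψ (x, y) * ∏ l, s l (y l))
                / ∑ x', ∑ y, ψ (x', y) * ∏ l, s l (y l)}) ∧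
      (sInf {r : ℝ | ∃ φ : ∀ l, Xl l → ℝ,
            (∀ l, φ l ∈ convexHull ℝ ((S l : Set (Xl l → ℝ)))) ∧
            r = (∑ y, ψ (x, y) * ∏ l, φ l (y l))
                / ∑ x', ∑ y, ψ (x', y) * ∏ l, φ l (y l)}
        = sInf {r : ℝ | ∃ s : ∀ l, Xl l → ℝ, (∀ l, s l ∈ S l) ∧
            r = (∑ y, ψ (x, y) * ∏ l, s l (y l))
                / ∑ x', ∑ y, ψ (x', y) * ∏ l, s l (y l)}) := by
  intro x
  set A := MultilinearMap.tensorPairing fun y => ψ (x, y)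
  set B := ∑ x', MultilinearMap.tensorPairing fun y => ψ (x', y)
  have hA (φ : ∀ l, Xl l → ℝ) : A φ = ∑ y, ψ (x, y) * ∏ l, φ l (y l) :=
    MultilinearMap.tensorPairing_apply _ φ
  have hB (φ : ∀ l, Xl l → ℝ) : B φ = ∑ x', ∑ y, ψ (x', y) * ∏ l, φ l (y l) := by
    simp [B, MultilinearMap.tensorPairing_apply]
  simp only [← hA, ← hB] at hpos ⊢
  have hull (s : ∀ l, Xl l → ℝ) (hs : ∀ l, s l ∈ S l) :
      ∀ l, s l ∈ convexHull ℝ (S l : Set (Xl l → ℝ)) :=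
    fun l => subset_convexHull ℝ _ (Finset.mem_coe.2 (hs l))
  constructor
  · refine csSup_eq_csSup_of_forall_exists_le ?_
      fun _ ⟨s, hs, hr⟩ => ⟨_, ⟨s, hull s hs, hr⟩, le_rfl⟩
    rintro _ ⟨φ, hφ, rfl⟩
    obtain ⟨s, hs, hle⟩ := MultilinearMap.exists_div_ge_of_mem_convexHull A B hpos hφ
    exact ⟨_, ⟨s, hs, rfl⟩, hle⟩
  · -- `sInf` on `ℝ` is `sSup` on `ℝᵒᵈ`.
    refine csSup_eq_csSup_of_forall_exists_le (α := ℝᵒᵈ) ?_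
      fun _ ⟨s, hs, hr⟩ => ⟨_, ⟨s, hull s hs, hr⟩, le_rfl⟩
    rintro _ ⟨φ, hφ, rfl⟩
    obtain ⟨s, hs, hle⟩ := MultilinearMap.exists_div_le_of_mem_convexHull A B hpos hφ
    exact ⟨_, ⟨s, hs, rfl⟩, hle⟩

/-- Corollary of the product lemma: the extrema of the normalized marginal over
choices `φ l ∈ convexHull (S l)` coincide with those over choices `s l ∈ S l`. -/
theorem stmt_8 {X : Type*} [Fintype X] [Nonempty X]
    {L : Type*} [Fintype L] [DecidableEq L] [Nonempty L]
    (Xl : L → Type*) [∀ l, Fintype (Xl l)] [∀ l, Nonempty (Xl l)]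
    (ψ : X × (∀ l, Xl l) → ℝ) (hψ : ∀ z, 0 ≤ ψ z)
    (S : ∀ l, Finset (Xl l → ℝ))
    (hS : ∀ l, ∀ f ∈ S l, ∀ xl, 0 ≤ f xl)
    (hpos : ∀ s : ∀ l, Xl l → ℝ, (∀ l, s l ∈ S l) →
      0 < ∑ x, ∑ y, ψ (x, y) * ∏ l, s l (y l)) :
    ∀ x : X,
      (sSup {r : ℝ | ∃ φ : ∀ l, Xl l → ℝ,
            (∀ l, φ l ∈ convexHull ℝ ((S l : Set (Xl l → ℝ)))) ∧
            r = (∑ y, ψ (x, y) * ∏ l, φ l (y l))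
                / ∑ x', ∑ y, ψ (x', y) * ∏ l, φ l (y l)}
        = sSup {r : ℝ | ∃ s : ∀ l, Xl l → ℝ, (∀ l, s l ∈ S l) ∧
            r = (∑ y, ψ (x, y) * ∏ l, s l (y l))
                / ∑ x', ∑ y, ψ (x', y) * ∏ l, s l (y l)}) ∧
      (sInf {r : ℝ | ∃ φ : ∀ l, Xl l → ℝ,
            (∀ l, φ l ∈ convexHull ℝ ((S l : Set (Xl l → ℝ)))) ∧
            r = (∑ y, ψ (x, y) * ∏ l, φ l (y l))
                / ∑ x', ∑ y, ψ (x', y) * ∏ l, φ l (y l)}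
        = sInf {r : ℝ | ∃ s : ∀ l, Xl l → ℝ, (∀ l, s l ∈ S l) ∧
            r = (∑ y, ψ (x, y) * ∏ l, s l (y l))
                / ∑ x', ∑ y, ψ (x', y) * ∏ l, s l (y l)}) :=
  stmt_8_general Xl ψ S hpos
end

section
/- (Second basic lemma / telegraph expansion.) Let A be a finite nonempty index set with finite nonempty types (X_a)_{a∈A}, let C be a finite nonempty type, and let Ψ : (Π_{a∈A} X_a) × C → ℝ be nonnegative. Suppose that for every i ∈ A and every y ∈ Π_{a∈A, a≠i} X_a, ∑_{x_i ∈ X_i} ∑_{c∈C} Ψ((x_i, y), c) > 0. For each i ∈ A, define l_i, u_i : X_i → ℝ by letting l_i(x_i) (respectively u_i(x_i)) be the infimum (respectively supremum), over all nonzero factorized measures g on Π_{a≠i} X_a, of the value at x_i of the normalization of the function x_i ↦ ∑_{y ∈ Π_{a≠i} X_a} ∑_{c∈C} Ψ((x_i, y), c) g(y). Then for every x ∈ Π_{a∈A} X_a: ∏_{i∈A} l_i(x_i) ≤ N(x ↦ ∑_{c∈C} Ψ(x,c))(x) ≤ ∏_{i∈A} u_i(x_i), where N denotes normalization of the function x ↦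 ∑_{c} Ψ(x,c) on Π_{a∈A} X_a. -/
def splice {A : Type*} [DecidableEq A] {X : A → Type*} (i : A) (xi : X i)
    (y : ∀ a : {a : A // a ≠ i}, X a.1) : ∀ a, X a :=
  fun a => if h : a = i then cast (congrArg X h).symm xi else y ⟨a, h⟩

theorem splice_apply_same {A : Type*} [DecidableEq A] {X : A → Type*} (i : A) (xi : X i)
    (y : ∀ a : {a : A // a ≠ i}, X a.1) : splice i xi y i = xi := by
  simp [splice]

theorem splice_apply_ne {A : Type*} [DecidableEq A] {X : A → Type*} (i : A) (xi : X i)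
    (y : ∀ a : {a : A // a ≠ i}, X a.1) (a : A) (h : a ≠ i) : splice i xi y a = y ⟨a, h⟩ :=
  dif_neg h

theorem sum_splice {A : Type*} [Fintype A] [DecidableEq A] {X : A → Type*}
    [∀ a, Fintype (X a)] (i : A) (f : (∀ a, X a) → ℝ) :
    ∑ x', f x' = ∑ xi : X i, ∑ y, f (splice i xi y) := by
  have h1 : ∑ x', f x'
      = ∑ p : X i × (∀ a : {a : A // a ≠ i}, X a.1), f (splice i p.1 p.2) := by
    apply Fintype.sum_equiv (Equiv.piSplitAt i X)
    intro x'
    congr 1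
    funext a
    by_cases h : a = i
    · subst h; rw [splice_apply_same]; rfl
    · rw [splice_apply_ne _ _ _ _ h]; rfl
  rw [h1, Fintype.sum_prod_type]

/-- Second basic lemma (telegraph expansion): the normalized marginal on the full
product `∀ a, X a` is bounded pointwise between the products of the one-variable
lower bounds `l i` and upper bounds `u i`, where `l i` and `u i` are the pointwise
infimum and supremum, over nonzero factorized measures `g` on the remaining
coordinates, of the corresponding normalized single-variable marginal. -/
theorem stmt_9 {A : Type*} [Fintype A] [DecidableEq A] [Nonempty A]
    (X : A → Type*) [∀ a, Fintype (X a)] [∀ a, Nonempty (X a)]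
    (C : Type*) [Fintype C] [Nonempty C]
    (Ψ : (∀ a, X a) × C → ℝ) (hΨ : ∀ z, 0 ≤ Ψ z)
    (hpos : ∀ (i : A) (y : ∀ a : {a : A // a ≠ i}, X a.1),
      0 < ∑ xi : X i, ∑ c : C, Ψ (splice i xi y, c))
    (l u : ∀ i, X i → ℝ)
    (hl : ∀ (i : A) (xi : X i),
      IsGLB {r : ℝ | ∃ g : (∀ a : {a : A // a ≠ i}, X a.1) → ℝ,
          (∃ gs : ∀ a : {a : A // a ≠ i}, X a.1 → ℝ,
            (∀ a z, 0 ≤ gs a z) ∧ g = fun y => ∏ a, gs a (y a)) ∧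
          (∃ y, 0 < g y) ∧
          r = (∑ y, ∑ c, Ψ (splice i xi y, c) * g y)
              / ∑ xi' : X i, ∑ y, ∑ c, Ψ (splice i xi' y, c) * g y}
        (l i xi))
    (hu : ∀ (i : A) (xi : X i),
      IsLUB {r : ℝ | ∃ g : (∀ a : {a : A // a ≠ i}, X a.1) → ℝ,
          (∃ gs : ∀ a : {a : A // a ≠ i}, X a.1 → ℝ,
            (∀ a z, 0 ≤ gs a z) ∧ g = fun y => ∏ a, gs a (y a)) ∧
          (∃ y, 0 < g y) ∧
          r = (∑ y, ∑ c, Ψ (splice i xi y, c) * g y)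
              / ∑ xi' : X i, ∑ y, ∑ c, Ψ (splice i xi' y, c) * g y}
        (u i xi)) :
    ∀ x : ∀ a, X a,
      (∏ i, l i (x i)) ≤ (∑ c, Ψ (x, c)) / (∑ x', ∑ c, Ψ (x', c)) ∧
      (∑ c, Ψ (x, c)) / (∑ x', ∑ c, Ψ (x', c)) ≤ ∏ i, u i (x i) := by
  classical
  have hlnn : ∀ (i : A) (xi : X i), 0 ≤ l i xi := by
    intro i xi
    apply (hl i xi).2
    rintro r ⟨g, ⟨gs, hgs0, hgprod⟩, -, hr⟩
    have hgnn : ∀ y, 0 ≤ g y := by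
      intro y; rw [hgprod]; exact Finset.prod_nonneg fun a _ => hgs0 a _
    rw [hr]
    apply div_nonneg
    · exact Finset.sum_nonneg fun y _ => Finset.sum_nonneg fun c _ =>
        mul_nonneg (hΨ _) (hgnn y)
    · exact Finset.sum_nonneg fun xi' _ => Finset.sum_nonneg fun y _ =>
        Finset.sum_nonneg fun c _ => mul_nonneg (hΨ _) (hgnn y)
  intro x
  have hFnn : ∀ x' : ∀ a, X a, 0 ≤ ∑ c, Ψ (x', c) :=
    fun x' => Finset.sum_nonneg fun c _ => hΨ _
  set G : Finset A → ℝ :=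
    fun S => ∑ x' : ∀ a, X a, if ∀ a ∈ S, x' a = x a then (∑ c, Ψ (x', c)) else 0 with hGdef
  have hGnn : ∀ S, 0 ≤ G S := by
    intro S
    apply Finset.sum_nonneg
    intro x' _
    split_ifs
    exacts [hFnn x', le_rfl]
  have hGsplit : ∀ (S : Finset A) (i : A),
      G S = ∑ y, ∑ xi : X i,
        if ∀ a ∈ S, splice i xi y a = x a then (∑ c, Ψ (splice i xi y, c)) else 0 := by
    intro S i
    simp only [hGdef]
    rw [sum_splice i (fun x' => if ∀ a ∈ S, x' a = x a then (∑ c, Ψ (x', c)) else 0)]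
    rw [Finset.sum_comm]
  have hGpos : ∀ (S : Finset A) (i : A), i ∉ S → 0 < G S := by
    intro S i hi
    rw [hGsplit S i]
    apply Finset.sum_pos'
    · intro y _
      apply Finset.sum_nonneg
      intro xi _
      split_ifs
      exacts [hFnn _, le_rfl]
    · refine ⟨fun a => x a.1, Finset.mem_univ _, ?_⟩
      have hcond : ∀ xi : X i, ∀ a ∈ S, splice i xi (fun a => x a.1) a = x a := by
        intro xi a ha
        have hne : a ≠ i := fun h => hi (h ▸ ha)
        rw [splice_apply_ne _ _ _ _ hne]
      calc (0:ℝ) < ∑ xi : X i, ∑ c, Ψ (splice i xi (fun a => x a.1), c) := hpos i _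
        _ = _ := by
            apply Finset.sum_congr rfl
            intro xi _
            rw [if_pos (hcond xi)]
  have key : ∀ (i : A) (S : Finset A), i ∉ S →
      l i (x i) ≤ G (insert i S) / G S ∧ G (insert i S) / G S ≤ u i (x i) ∧
        0 ≤ G (insert i S) / G S := by
    intro i S hi
    have hGS := hGpos S i hi
    set gs : ∀ a : {a : A // a ≠ i}, X a.1 → ℝ :=
      fun a z => if a.1 ∈ S ∧ z ≠ x a.1 then 0 else 1 with hgs
    set g : (∀ a : {a : A // a ≠ i}, X a.1) → ℝ := fun y => ∏ a, gs a (y a) with hg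
    have hgite : ∀ y, g y = if ∀ a : {a : A // a ≠ i}, a.1 ∈ S → y a = x a.1 then 1 else 0 := by
      intro y
      by_cases h : ∀ a : {a : A // a ≠ i}, a.1 ∈ S → y a = x a.1
      · rw [if_pos h]
        simp only [hg]
        apply Finset.prod_eq_one
        intro a _
        simp only [hgs]
        exact if_neg (by push_neg; exact fun haS => h a haS)
      · rw [if_neg h]
        push_neg at h
        obtain ⟨a, haS, hya⟩ := h
        simp only [hg]
        apply Finset.prod_eq_zero (Finset.mem_univ a)
        simp only [hgs]
        exact if_pos ⟨haS, hya⟩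
    have hgs0 : ∀ a z, 0 ≤ gs a z := by
      intro a z
      simp only [hgs]
      split_ifs <;> norm_num
    have hy0 : 0 < g (fun a => x a.1) := by
      have hc : ∀ a : {a : A // a ≠ i}, a.1 ∈ S →
          (fun a : {a : A // a ≠ i} => x a.1) a = x a.1 := fun a _ => rfl
      rw [hgite, if_pos hc]
      norm_num
    have hcondiff : ∀ (xi : X i) (y : ∀ a : {a : A // a ≠ i}, X a.1),
        (∀ a ∈ S, splice i xi y a = x a) ↔
          (∀ a : {a : A // a ≠ i}, a.1 ∈ S → y a = x a.1) := by
      intro xi y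
      constructor
      · intro h a haS
        have h2 := h a.1 haS
        rwa [splice_apply_ne _ _ _ _ a.2] at h2
      · intro h a haS
        have hne : a ≠ i := fun he => hi (he ▸ haS)
        rw [splice_apply_ne _ _ _ _ hne]
        exact h ⟨a, hne⟩ haS
    have hmarg : ∀ xi : X i,
        (∑ y, ∑ c, Ψ (splice i xi y, c) * g y)
          = ∑ y, if ∀ a ∈ S, splice i xi y a = x a
              then (∑ c, Ψ (splice i xi y, c)) else 0 := by
      intro xi
      apply Finset.sum_congr rfl
      intro y _
      rw [← Finset.sum_mul, hgite y, mul_ite, mul_one, mul_zero]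
      exact (if_congr (hcondiff xi y) rfl rfl).symm
    have hden : G S = ∑ xi' : X i, ∑ y, ∑ c, Ψ (splice i xi' y, c) * g y := by
      rw [hGsplit S i, Finset.sum_comm]
      exact (Finset.sum_congr rfl fun xi' _ => hmarg xi').symm
    have hnum : G (insert i S) = ∑ y, ∑ c, Ψ (splice i (x i) y, c) * g y := by
      rw [hGsplit (insert i S) i, Finset.sum_comm]
      have hins : ∀ (xi : X i) (y : ∀ a : {a : A // a ≠ i}, X a.1),
          (∀ a ∈ insert i S, splice i xi y a = x a)
            ↔ (xi = x i ∧ ∀ a ∈ S, splice i xi y a = x a) := by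
        intro xi y
        rw [Finset.forall_mem_insert, splice_apply_same]
      calc (∑ xi : X i, ∑ y,
            if ∀ a ∈ insert i S, splice i xi y a = x a
            then (∑ c, Ψ (splice i xi y, c)) else 0)
          = ∑ xi : X i, if xi = x i then
              (∑ y, if ∀ a ∈ S, splice i xi y a = x a
                then (∑ c, Ψ (splice i xi y, c)) else 0) else 0 := by
            apply Finset.sum_congr rfl
            intro xi _
            by_cases hxi : xi = x i
            · rw [if_pos hxi]
              apply Finset.sum_congr rfl
              intro y _
              rw [if_congr (hins xi y) rfl rfl]
              simp [hxi]
            · rw [if_neg hxi]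
              apply Finset.sum_eq_zero
              intro y _
              rw [if_congr (hins xi y) rfl rfl, if_neg]
              intro hcon
              exact hxi hcon.1
        _ = ∑ y, if ∀ a ∈ S, splice i (x i) y a = x a
              then (∑ c, Ψ (splice i (x i) y, c)) else 0 := by
            rw [Finset.sum_ite_eq' Finset.univ (x i)]
            rw [if_pos (Finset.mem_univ _)]
        _ = ∑ y, ∑ c, Ψ (splice i (x i) y, c) * g y := (hmarg (x i)).symm
    have hreq : G (insert i S) / G S
        = (∑ y, ∑ c, Ψ (splice i (x i) y, c) * g y)
            / ∑ xi' : X i, ∑ y, ∑ c, Ψ (splice i xi' y, c) * g y := by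
      rw [hnum, hden]
    have h1 : l i (x i) ≤ G (insert i S) / G S :=
      (hl i (x i)).1 ⟨g, ⟨gs, hgs0, hg⟩, ⟨_, hy0⟩, hreq⟩
    have h2 : G (insert i S) / G S ≤ u i (x i) :=
      (hu i (x i)).1 ⟨g, ⟨gs, hgs0, hg⟩, ⟨_, hy0⟩, hreq⟩
    exact ⟨h1, h2, div_nonneg (hGnn _) hGS.le⟩
  have hGe : 0 < G ∅ := hGpos ∅ (Classical.arbitrary A) (Finset.notMem_empty _)
  have main : ∀ S : Finset A,
      (∏ i ∈ S, l i (x i)) ≤ G S / G ∅ ∧ G S / G ∅ ≤ ∏ i ∈ S, u i (x i) := by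
    intro S
    induction S using Finset.induction_on with
    | empty => simp [div_self (ne_of_gt hGe)]
    | @insert i S hi ih =>
      obtain ⟨h1, h2, h3⟩ := key i S hi
      have hGS := hGpos S i hi
      have hsplit : G (insert i S) / G ∅ = (G (insert i S) / G S) * (G S / G ∅) := by
        field_simp
      rw [Finset.prod_insert hi, Finset.prod_insert hi, hsplit]
      constructor
      · exact mul_le_mul h1 ih.1 (Finset.prod_nonneg fun j _ => hlnn j _) h3
      · exact mul_le_mul h2 ih.2 (div_nonneg (hGnn S) hGe.le) (le_trans h3 h2)
  have huniv : G Finset.univ = ∑ c, Ψ (x, c) := by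
    simp only [hGdef]
    calc (∑ x' : ∀ a, X a, if ∀ a ∈ Finset.univ, x' a = x a then (∑ c, Ψ (x', c)) else 0)
        = ∑ x' : ∀ a, X a, if x' = x then (∑ c, Ψ (x', c)) else 0 := by
          apply Finset.sum_congr rfl
          intro x' _
          refine if_congr ?_ rfl rfl
          simp [funext_iff]
      _ = ∑ c, Ψ (x, c) := by
          rw [Finset.sum_ite_eq' Finset.univ x, if_pos (Finset.mem_univ _)]
  have hempty : G ∅ = ∑ x' : ∀ a, X a, ∑ c, Ψ (x', c) := by
    simp [hGdef]
  have hmain := main Finset.univ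
  rw [huniv, hempty] at hmain
  exact hmain
end

section
/- (Example I bound for a triangle factor graph.) Let X_i, X_j, X_k be finite nonempty types and let ψ_J : X_i × X_j → ℝ, ψ_K : X_i × X_k → ℝ, ψ_L : X_j × X_k → ℝ be nonnegative. Assume: for every x_j, ∑_{x_i} ψ_J(x_i, x_j) > 0; for every x_k, ∑_{x_i} ψ_K(x_i, x_k) > 0; and ∑_{x_i, x_j, x_k} ψ_J(x_i,x_j) ψ_K(x_i,x_k) ψ_L(x_j,x_k) > 0. Define l_J(x_i) := min_{x_j} ψ_J(x_i,x_j) / ∑_{x'_i} ψ_J(x'_i,x_j) and u_J(x_i) := max_{x_j} ψ_J(x_i,x_j) / ∑_{x'_i} ψ_J(x'_i,x_j), and similarly l_K, u_K from ψ_K with x_k in place of x_j. Let P : X_i → ℝ be the normalization of x_i ↦ ∑_{x_j, x_k} ψ_J(x_i,x_j) ψ_K(x_i,x_k) ψ_L(x_j,x_k). Then for every x_i ∈ X_i, P(x_i) lies between the infimum and the supremum of N(f·g)(x_i) over all pairs of functions f, g : X_i → ℝ with l_J ≤ f ≤ u_J and l_K ≤ g ≤ u_K pointwise and f·g nonzero,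 where f·g is the pointwise product and N denotes normalization. -/
/-!
Let `F_{xj}` and `G_{xk}` be the normalized columns `ψJ(·, xj)` and `ψK(·, xk)`; by definition
they lie in the boxes `[lJ, uJ]` and `[lK, uK]`. A nonnegative function is its total mass times
its normalization, so the unnormalized marginal `x ↦ ∑ ψJ ψK ψL` is the nonnegative mixture
`∑_{xj, xk} c(xj, xk) • (F_{xj} · G_{xk})` with `c = |ψJ(·, xj)| |ψK(·, xk)| ψL(xj, xk)`.
Normalizing a nonnegative mixture gives a convex combination of the normalized components
(a mediant inequality), and each normalized component `N(F_{xj} · G_{xk})` is one of the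
candidates whose infimum and supremum bound `P`.
-/

open Finset

noncomputable def normalized {X : Type*} [Fintype X] (φ : X → ℝ) (x : X) : ℝ :=
  φ x / ∑ y, φ y

section Normalize

variable {X : Type*} [Fintype X] {φ : X → ℝ}

theorem normalized_mem_Icc (hφ : ∀ x, 0 ≤ φ x) (x : X) : normalized φ x ∈ Set.Icc 0 1 :=
  ⟨div_nonneg (hφ x) (sum_nonneg fun y _ => hφ y),
    div_le_one_of_le₀ (single_le_sum (fun y _ => hφ y) (mem_univ x))
      (sum_nonneg fun y _ => hφ y)⟩

/-- Zero mass forces `φ = 0`, so with the junk value `x / 0 = 0` this holds there too. -/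
theorem sum_mul_normalized (hφ : ∀ x, 0 ≤ φ x) (x : X) :
    (∑ y, φ y) * normalized φ x = φ x := by
  rcases eq_or_ne (∑ y, φ y) 0 with h | h
  · rw [h, zero_mul, (sum_eq_zero_iff_of_nonneg fun y _ => hφ y).1 h x (mem_univ x)]
  · exact mul_div_cancel₀ _ h

theorem normalized_mem_Icc_iInf_iSup {Y : Type*} [Finite Y] (ψ : Y → X → ℝ) (y : Y) (x : X) :
    normalized (ψ y) x ∈ Set.Icc (⨅ y', normalized (ψ y') x) (⨆ y', normalized (ψ y') x) :=
  ⟨ciInf_le (Finite.bddBelow_range _) y,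
    le_ciSup (Finite.bddAbove_range fun y' => normalized (ψ y') x) y⟩

theorem iInf_normalized_nonneg {Y : Type*} {ψ : Y → X → ℝ} (hψ : ∀ y x, 0 ≤ ψ y x)
    (x : X) : 0 ≤ ⨅ y, normalized (ψ y) x :=
  Real.iInf_nonneg fun y => (normalized_mem_Icc (hψ y) x).1

end Normalize

section Mixture

variable {ι : Type*} [Fintype ι] {m M : ℝ}

theorem sum_div_sum_mem_Icc {a b : ι → ℝ} (hb : ∀ i, 0 ≤ b i)
    (hab : ∀ i, b i = 0 → a i = 0) (hpos : 0 < ∑ i, b i)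
    (h : ∀ i, b i ≠ 0 → a i / b i ∈ Set.Icc m M) :
    (∑ i, a i) / ∑ i, b i ∈ Set.Icc m M := by
  have key : ∀ i, m * b i ≤ a i ∧ a i ≤ M * b i := by
    intro i
    rcases eq_or_ne (b i) 0 with h0 | h0
    · simp [h0, hab i h0]
    · have hbi := (hb i).lt_of_ne' h0
      exact ⟨(le_div_iff₀ hbi).1 (h i h0).1, (div_le_iff₀ hbi).1 (h i h0).2⟩
  rw [Set.mem_Icc, le_div_iff₀ hpos, div_le_iff₀ hpos, mul_sum, mul_sum]
  exact ⟨sum_le_sum fun i _ => (key i).1, sum_le_sum fun i _ => (key i).2⟩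

variable {X : Type*} [Fintype X]

theorem normalized_mixture_eq (c : ι → ℝ) (φ : ι → X → ℝ) (x₀ : X) :
    normalized (fun x => ∑ i, c i * φ i x) x₀ =
      (∑ i, c i * φ i x₀) / ∑ i, c i * ∑ x, φ i x := by
  simp only [normalized, mul_sum]
  rw [sum_comm]

theorem normalized_mixture_mem_Icc {c : ι → ℝ} {φ : ι → X → ℝ} (hc : ∀ i, 0 ≤ c i)
    (hφ : ∀ i x, 0 ≤ φ i x) (hpos : 0 < ∑ x, ∑ i, c i * φ i x) (x₀ : X)
    (h : ∀ i, (∃ x, φ i x ≠ 0) → normalized (φ i) x₀ ∈ Set.Icc m M) :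
    normalized (fun x => ∑ i, c i * φ i x) x₀ ∈ Set.Icc m M := by
  rw [normalized_mixture_eq]
  refine sum_div_sum_mem_Icc (fun i => mul_nonneg (hc i) (sum_nonneg fun x _ => hφ i x))
    (fun i hi => ?_) (by rw [sum_comm] at hpos; simpa only [mul_sum] using hpos) (fun i hi => ?_)
  · rcases mul_eq_zero.1 hi with hci | hsum
    · rw [hci, zero_mul]
    · rw [(sum_eq_zero_iff_of_nonneg fun x _ => hφ i x).1 hsum x₀ (mem_univ x₀), mul_zero]
  · obtain ⟨hci, hsum⟩ := mul_ne_zero_iff.1 hi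
    obtain ⟨x, -, hx⟩ := exists_ne_zero_of_sum_ne_zero hsum
    rw [mul_div_mul_left _ _ hci]
    exact h i ⟨x, hx⟩

theorem normalized_mixture_mem_Icc_sInf_sSup {S : Set ℝ} (hS : BddBelow S) (hS' : BddAbove S)
    {c : ι → ℝ} {φ : ι → X → ℝ} (hc : ∀ i, 0 ≤ c i) (hφ : ∀ i x, 0 ≤ φ i x)
    (hpos : 0 < ∑ x, ∑ i, c i * φ i x) (x₀ : X)
    (h : ∀ i, (∃ x, φ i x ≠ 0) → normalized (φ i) x₀ ∈ S) :
    normalized (fun x => ∑ i, c i * φ i x) x₀ ∈ Set.Icc (sInf S) (sSup S) :=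
  normalized_mixture_mem_Icc hc hφ hpos x₀ fun i hi =>
    ⟨csInf_le hS (h i hi), le_csSup hS' (h i hi)⟩

end Mixture

theorem sum_sum_mul_mul_eq_sum_mul_normalized {Xi Xj Xk : Type*} [Fintype Xi] [Fintype Xj]
    [Fintype Xk] {ψJ : Xi × Xj → ℝ} {ψK : Xi × Xk → ℝ} (ψL : Xj × Xk → ℝ)
    (hψJ : ∀ z, 0 ≤ ψJ z) (hψK : ∀ z, 0 ≤ ψK z) (x : Xi) :
    ∑ xj, ∑ xk, ψJ (x, xj) * ψK (x, xk) * ψL (xj, xk) =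
      ∑ p : Xj × Xk, (∑ x', ψJ (x', p.1)) * (∑ x', ψK (x', p.2)) * ψL p *
        (normalized (fun x => ψJ (x, p.1)) x * normalized (fun x => ψK (x, p.2)) x) := by
  rw [Fintype.sum_prod_type]
  refine sum_congr rfl fun xj _ => sum_congr rfl fun xk _ => ?_
  rw [← sum_mul_normalized (fun x => hψJ (x, xj)) x,
    ← sum_mul_normalized (fun x => hψK (x, xk)) x]
  ring

theorem stmt_12_general {Xi Xj Xk : Type*}
    [Fintype Xi] [Fintype Xj] [Fintype Xk]
    (ψJ : Xi × Xj → ℝ) (ψK : Xi × Xk → ℝ) (ψL : Xj × Xk → ℝ)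
    (hψJ : ∀ z, 0 ≤ ψJ z) (hψK : ∀ z, 0 ≤ ψK z) (hψL : ∀ z, 0 ≤ ψL z)
    (hZpos : 0 < ∑ xi, ∑ xj, ∑ xk, ψJ (xi, xj) * ψK (xi, xk) * ψL (xj, xk))
    (lJ uJ : Xi → ℝ)
    (hlJ : ∀ x, lJ x = ⨅ xj, ψJ (x, xj) / ∑ x', ψJ (x', xj))
    (huJ : ∀ x, uJ x = ⨆ xj, ψJ (x, xj) / ∑ x', ψJ (x', xj))
    (lK uK : Xi → ℝ)
    (hlK : ∀ x, lK x = ⨅ xk, ψK (x, xk) / ∑ x', ψK (x', xk))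
    (huK : ∀ x, uK x = ⨆ xk, ψK (x, xk) / ∑ x', ψK (x', xk))
    (P : Xi → ℝ)
    (hP : ∀ xi, P xi = (∑ xj, ∑ xk, ψJ (xi, xj) * ψK (xi, xk) * ψL (xj, xk))
        / ∑ x, ∑ xj, ∑ xk, ψJ (x, xj) * ψK (x, xk) * ψL (xj, xk)) :
    ∀ xi : Xi,
      sInf {r : ℝ | ∃ f g : Xi → ℝ,
          (∀ x, lJ x ≤ f x ∧ f x ≤ uJ x) ∧
          (∀ x, lK x ≤ g x ∧ g x ≤ uK x) ∧
          (∃ x, f x * g x ≠ 0) ∧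
          r = f xi * g xi / ∑ x, f x * g x}
        ≤ P xi ∧
      P xi ≤ sSup {r : ℝ | ∃ f g : Xi → ℝ,
          (∀ x, lJ x ≤ f x ∧ f x ≤ uJ x) ∧
          (∀ x, lK x ≤ g x ∧ g x ≤ uK x) ∧
          (∃ x, f x * g x ≠ 0) ∧
          r = f xi * g xi / ∑ x, f x * g x} := by
  intro xi
  set F : Xj → Xi → ℝ := fun xj => normalized fun x => ψJ (x, xj)
  set G : Xk → Xi → ℝ := fun xk => normalized fun x => ψK (x, xk)
  set c : Xj × Xk → ℝ := fun p => (∑ x, ψJ (x, p.1)) * (∑ x, ψK (x, p.2)) * ψL p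
  have hmix := sum_sum_mul_mul_eq_sum_mul_normalized ψL hψJ hψK
  have hPmix : P xi = normalized (fun x => ∑ p, c p * (F p.1 x * G p.2 x)) xi := by
    simp only [hP, hmix]; rfl
  have hF : ∀ xj x, F xj x ∈ Set.Icc (lJ x) (uJ x) := fun xj x => by
    rw [hlJ, huJ]; exact normalized_mem_Icc_iInf_iSup (fun xj x => ψJ (x, xj)) xj x
  have hG : ∀ xk x, G xk x ∈ Set.Icc (lK x) (uK x) := fun xk x => by
    rw [hlK, huK]; exact normalized_mem_Icc_iInf_iSup (fun xk x => ψK (x, xk)) xk x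
  have hlJ₀ : ∀ x, 0 ≤ lJ x := fun x =>
    (hlJ x).symm ▸ iInf_normalized_nonneg (fun xj x => hψJ (x, xj)) x
  have hlK₀ : ∀ x, 0 ≤ lK x := fun x =>
    (hlK x).symm ▸ iInf_normalized_nonneg (fun xk x => hψK (x, xk)) x
  have hboxes_nonneg : ∀ f g : Xi → ℝ, (∀ x, lJ x ≤ f x ∧ f x ≤ uJ x) →
      (∀ x, lK x ≤ g x ∧ g x ≤ uK x) → ∀ x, 0 ≤ f x * g x := fun f g hf hg x =>
    mul_nonneg ((hlJ₀ x).trans (hf x).1) ((hlK₀ x).trans (hg x).1)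
  have hc : ∀ p, 0 ≤ c p := fun p =>
    mul_nonneg (mul_nonneg (sum_nonneg fun x _ => hψJ _) (sum_nonneg fun x _ => hψK _)) (hψL p)
  rw [hPmix]
  refine normalized_mixture_mem_Icc_sInf_sSup ⟨0, ?_⟩ ⟨1, ?_⟩ hc
    (fun p => hboxes_nonneg (F p.1) (G p.2) (hF p.1) (hG p.2)) (by simpa only [hmix] using hZpos)
    xi fun p hp => ⟨F p.1, G p.2, hF p.1, hG p.2, hp, rfl⟩
  · rintro r ⟨f, g, hf, hg, -, rfl⟩
    exact (normalized_mem_Icc (hboxes_nonneg f g hf hg) xi).1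
  · rintro r ⟨f, g, hf, hg, -, rfl⟩
    exact (normalized_mem_Icc (hboxes_nonneg f g hf hg) xi).2

/-- Example I bound for a triangle factor graph: the exact marginal `P` of variable `i`
lies between the extrema of normalized products `N(f·g)` where `f` ranges over the box
`B[lJ, uJ]` and `g` over the box `B[lK, uK]`. -/
theorem stmt_12 {Xi Xj Xk : Type*}
    [Fintype Xi] [Nonempty Xi] [Fintype Xj] [Nonempty Xj] [Fintype Xk] [Nonempty Xk]
    (ψJ : Xi × Xj → ℝ) (ψK : Xi × Xk → ℝ) (ψL : Xj × Xk → ℝ)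
    (hψJ : ∀ z, 0 ≤ ψJ z) (hψK : ∀ z, 0 ≤ ψK z) (hψL : ∀ z, 0 ≤ ψL z)
    (hJpos : ∀ xj, 0 < ∑ xi, ψJ (xi, xj))
    (hKpos : ∀ xk, 0 < ∑ xi, ψK (xi, xk))
    (hZpos : 0 < ∑ xi, ∑ xj, ∑ xk, ψJ (xi, xj) * ψK (xi, xk) * ψL (xj, xk))
    (lJ uJ : Xi → ℝ)
    (hlJ : ∀ x, lJ x = ⨅ xj, ψJ (x, xj) / ∑ x', ψJ (x', xj))
    (huJ : ∀ x, uJ x = ⨆ xj, ψJ (x, xj) / ∑ x', ψJ (x', xj))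
    (lK uK : Xi → ℝ)
    (hlK : ∀ x, lK x = ⨅ xk, ψK (x, xk) / ∑ x', ψK (x', xk))
    (huK : ∀ x, uK x = ⨆ xk, ψK (x, xk) / ∑ x', ψK (x', xk))
    (P : Xi → ℝ)
    (hP : ∀ xi, P xi = (∑ xj, ∑ xk, ψJ (xi, xj) * ψK (xi, xk) * ψL (xj, xk))
        / ∑ x, ∑ xj, ∑ xk, ψJ (x, xj) * ψK (x, xk) * ψL (xj, xk)) :
    ∀ xi : Xi,
      sInf {r : ℝ | ∃ f g : Xi → ℝ,
          (∀ x, lJ x ≤ f x ∧ f x ≤ uJ x) ∧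
          (∀ x, lK x ≤ g x ∧ g x ≤ uK x) ∧
          (∃ x, f x * g x ≠ 0) ∧
          r = f xi * g xi / ∑ x, f x * g x}
        ≤ P xi ∧
      P xi ≤ sSup {r : ℝ | ∃ f g : Xi → ℝ,
          (∀ x, lJ x ≤ f x ∧ f x ≤ uJ x) ∧
          (∀ x, lK x ≤ g x ∧ g x ≤ uK x) ∧
          (∃ x, f x * g x ≠ 0) ∧
          r = f xi * g xi / ∑ x, f x * g x} :=
  stmt_12_general ψJ ψK ψL hψJ hψK hψL hZpos lJ uJ hlJ huJ lK uK hlK huK P hP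
end

section
/- (Example II bound for a triangle factor graph.) Let X_i, X_j, X_k be finite nonempty types and let ψ_J : X_i × X_j → ℝ, ψ_K : X_i × X_k → ℝ, ψ_L : X_j × X_k → ℝ be nonnegative. Assume: for every x_j, ∑_{x_i} ψ_J(x_i, x_j) > 0; for every x_k, ∑_{x_i} ψ_K(x_i, x_k) > 0; for every x_j, ∑_{x_k} ψ_L(x_j, x_k) > 0; and ∑_{x_i, x_j, x_k} ψ_J(x_i,x_j) ψ_K(x_i,x_k) ψ_L(x_j,x_k) > 0. Define l_J(x_i) := min_{x_j} ψ_J(x_i,x_j)/∑_{x'_i} ψ_J(x'_i,x_j) and u_J(x_i) := max_{x_j} ψ_J(x_i,x_j)/∑_{x'_i} ψ_J(x'_i,x_j); define l_L(x_k) := min_{x_j} ψ_L(x_j,x_k)/∑_{x'_k} ψ_L(x_j,x'_k) and u_L(x_k) := max_{x_j} ψ_L(x_j,x_k)/∑_{x'_k} ψ_L(x_j,x'_k); and define l'(x_i) (respectively u'(x_i)) as the infimum (respectively supremum), over all nonzero h : X_k → ℝ with l_L ≤ h ≤ u_L pointwise, of N(x_i ↦ ∑_{x_k} ψ_K(x_i,x_k)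 h(x_k))(x_i). Let P : X_i → ℝ be the normalization of x_i ↦ ∑_{x_j, x_k} ψ_J(x_i,x_j) ψ_K(x_i,x_k) ψ_L(x_j,x_k). Then for every x_i ∈ X_i, P(x_i) lies between the infimum and the supremum of N(f·g)(x_i) over all pairs f, g : X_i → ℝ with l_J ≤ f ≤ u_J and l' ≤ g ≤ u' pointwise and f·g nonzero, where f·g is the pointwise product and N denotes normalization. -/
/-- Example II bound for a triangle factor graph: the exact marginal `P` of variable `i`
lies between the extrema of normalized products `N(f·g)` where `f` ranges over the box
`B[lJ, uJ]` and `g` over the box `B[l', u']` obtained by propagating the box `B[lL, uL]`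
through the factor `ψK`. -/
theorem stmt_13 {Xi Xj Xk : Type*}
    [Fintype Xi] [Nonempty Xi] [Fintype Xj] [Nonempty Xj] [Fintype Xk] [Nonempty Xk]
    (ψJ : Xi × Xj → ℝ) (ψK : Xi × Xk → ℝ) (ψL : Xj × Xk → ℝ)
    (hψJ : ∀ z, 0 ≤ ψJ z) (hψK : ∀ z, 0 ≤ ψK z) (hψL : ∀ z, 0 ≤ ψL z)
    (hJpos : ∀ xj, 0 < ∑ xi, ψJ (xi, xj))
    (hKpos : ∀ xk, 0 < ∑ xi, ψK (xi, xk))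
    (hLpos : ∀ xj, 0 < ∑ xk, ψL (xj, xk))
    (hZpos : 0 < ∑ xi, ∑ xj, ∑ xk, ψJ (xi, xj) * ψK (xi, xk) * ψL (xj, xk))
    (lJ uJ : Xi → ℝ)
    (hlJ : ∀ x, lJ x = ⨅ xj, ψJ (x, xj) / ∑ x', ψJ (x', xj))
    (huJ : ∀ x, uJ x = ⨆ xj, ψJ (x, xj) / ∑ x', ψJ (x', xj))
    (lL uL : Xk → ℝ)
    (hlL : ∀ x, lL x = ⨅ xj, ψL (xj, x) / ∑ x', ψL (xj, x'))
    (huL : ∀ x, uL x = ⨆ xj, ψL (xj, x) / ∑ x', ψL (xj, x'))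
    (l' u' : Xi → ℝ)
    (hl' : ∀ xi, l' xi = sInf {r : ℝ | ∃ h : Xk → ℝ,
        (∀ z, lL z ≤ h z ∧ h z ≤ uL z) ∧ (∃ z, h z ≠ 0) ∧
        r = (∑ xk, ψK (xi, xk) * h xk) / ∑ x', ∑ xk, ψK (x', xk) * h xk})
    (hu' : ∀ xi, u' xi = sSup {r : ℝ | ∃ h : Xk → ℝ,
        (∀ z, lL z ≤ h z ∧ h z ≤ uL z) ∧ (∃ z, h z ≠ 0) ∧
        r = (∑ xk, ψK (xi, xk) * h xk) / ∑ x', ∑ xk, ψK (x', xk) * h xk})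
    (P : Xi → ℝ)
    (hP : ∀ xi, P xi = (∑ xj, ∑ xk, ψJ (xi, xj) * ψK (xi, xk) * ψL (xj, xk))
        / ∑ x, ∑ xj, ∑ xk, ψJ (x, xj) * ψK (x, xk) * ψL (xj, xk)) :
    ∀ xi : Xi,
      sInf {r : ℝ | ∃ f g : Xi → ℝ,
          (∀ x, lJ x ≤ f x ∧ f x ≤ uJ x) ∧
          (∀ x, l' x ≤ g x ∧ g x ≤ u' x) ∧
          (∃ x, f x * g x ≠ 0) ∧
          r = f xi * g xi / ∑ x, f x * g x}
        ≤ P xi ∧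
      P xi ≤ sSup {r : ℝ | ∃ f g : Xi → ℝ,
          (∀ x, lJ x ≤ f x ∧ f x ≤ uJ x) ∧
          (∀ x, l' x ≤ g x ∧ g x ≤ u' x) ∧
          (∃ x, f x * g x ≠ 0) ∧
          r = f xi * g xi / ∑ x, f x * g x} := by

  intro xi
  classical
  -- basic nonnegativity / box facts for J
  have hJd : ∀ x xj, 0 ≤ ψJ (x, xj) / ∑ x', ψJ (x', xj) := fun x xj =>
    div_nonneg (hψJ _) (hJpos xj).le
  have hlJ_le : ∀ x xj, lJ x ≤ ψJ (x, xj) / ∑ x', ψJ (x', xj) := fun x xj => by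
    rw [hlJ]
    exact ciInf_le (f := fun xj => ψJ (x, xj) / ∑ x', ψJ (x', xj))
      (Set.Finite.bddBelow (Set.finite_range _)) xj
  have hle_uJ : ∀ x xj, ψJ (x, xj) / ∑ x', ψJ (x', xj) ≤ uJ x := fun x xj => by
    rw [huJ]
    exact le_ciSup (f := fun xj => ψJ (x, xj) / ∑ x', ψJ (x', xj))
      (Set.Finite.bddAbove (Set.finite_range _)) xj
  have hlJ0 : ∀ x, 0 ≤ lJ x := fun x => by
    rw [hlJ]; exact le_ciInf fun xj => hJd x xj
  -- box facts for L
  have hLd : ∀ xj k, 0 ≤ ψL (xj, k) / ∑ k', ψL (xj, k') := fun xj k =>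
    div_nonneg (hψL _) (hLpos xj).le
  have hlL_le : ∀ k xj, lL k ≤ ψL (xj, k) / ∑ k', ψL (xj, k') := fun k xj => by
    rw [hlL]
    exact ciInf_le (f := fun xj => ψL (xj, k) / ∑ x', ψL (xj, x'))
      (Set.Finite.bddBelow (Set.finite_range _)) xj
  have hle_uL : ∀ k xj, ψL (xj, k) / ∑ k', ψL (xj, k') ≤ uL k := fun k xj => by
    rw [huL]
    exact le_ciSup (f := fun xj => ψL (xj, k) / ∑ x', ψL (xj, x'))
      (Set.Finite.bddAbove (Set.finite_range _)) xj
  have hlL0 : ∀ k, 0 ≤ lL k := fun k => by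
    rw [hlL]; exact le_ciInf fun xj => hLd xj k
  -- properties of the propagated sets
  have hDpos : ∀ (h : Xk → ℝ), (∀ z, lL z ≤ h z ∧ h z ≤ uL z) → (∃ z, h z ≠ 0) →
      0 < ∑ x', ∑ xk, ψK (x', xk) * h xk := by
    intro h hbox ⟨z, hz⟩
    have hh0 : ∀ k, 0 ≤ h k := fun k => le_trans (hlL0 k) (hbox k).1
    have hzpos : 0 < h z := lt_of_le_of_ne (hh0 z) (Ne.symm hz)
    rw [Finset.sum_comm]
    refine Finset.sum_pos' (fun k _ => Finset.sum_nonneg fun x _ =>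
      mul_nonneg (hψK _) (hh0 k)) ⟨z, Finset.mem_univ z, ?_⟩
    rw [← Finset.sum_mul]
    exact mul_pos (hKpos z) hzpos
  have hT01 : ∀ x : Xi, ∀ r ∈ {r : ℝ | ∃ h : Xk → ℝ,
      (∀ z, lL z ≤ h z ∧ h z ≤ uL z) ∧ (∃ z, h z ≠ 0) ∧
      r = (∑ xk, ψK (x, xk) * h xk) / ∑ x', ∑ xk, ψK (x', xk) * h xk},
      r ∈ Set.Icc (0:ℝ) 1 := by
    rintro x r ⟨h, hbox, hnz, rfl⟩
    have hh0 : ∀ k, 0 ≤ h k := fun k => le_trans (hlL0 k) (hbox k).1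
    have hD := hDpos h hbox hnz
    have hnum : 0 ≤ ∑ xk, ψK (x, xk) * h xk :=
      Finset.sum_nonneg fun k _ => mul_nonneg (hψK _) (hh0 k)
    constructor
    · exact div_nonneg hnum hD.le
    · rw [div_le_one hD]
      exact Finset.single_le_sum (fun x' _ => Finset.sum_nonneg fun k _ =>
        mul_nonneg (hψK _) (hh0 k)) (Finset.mem_univ x)
  have hl'0 : ∀ x, 0 ≤ l' x := fun x => by
    rw [hl']; exact Real.sInf_nonneg fun r hr => (hT01 x r hr).1
  -- the key quantities
  set a : Xj → Xi → ℝ := fun xj x => ∑ xk, ψJ (x, xj) * ψK (x, xk) * ψL (xj, xk) with ha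
  set A : Xj → ℝ := fun xj => ∑ x, a xj x with hA
  have ha0 : ∀ xj x, 0 ≤ a xj x := fun xj x => Finset.sum_nonneg fun k _ =>
    mul_nonneg (mul_nonneg (hψJ _) (hψK _)) (hψL _)
  have hA0 : ∀ xj, 0 ≤ A xj := fun xj => Finset.sum_nonneg fun x _ => ha0 xj x
  have hZ : (∑ x, ∑ xj, ∑ xk, ψJ (x, xj) * ψK (x, xk) * ψL (xj, xk)) = ∑ xj, A xj := by
    rw [Finset.sum_comm]
  set S := {r : ℝ | ∃ f g : Xi → ℝ,
      (∀ x, lJ x ≤ f x ∧ f x ≤ uJ x) ∧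
      (∀ x, l' x ≤ g x ∧ g x ≤ u' x) ∧
      (∃ x, f x * g x ≠ 0) ∧
      r = f xi * g xi / ∑ x, f x * g x} with hS
  -- S is contained in [0,1]
  have hS01 : ∀ r ∈ S, r ∈ Set.Icc (0:ℝ) 1 := by
    rintro r ⟨f, g, hf, hg, ⟨x0, hx0⟩, rfl⟩
    have hf0 : ∀ x, 0 ≤ f x := fun x => le_trans (hlJ0 x) (hf x).1
    have hg0 : ∀ x, 0 ≤ g x := fun x => le_trans (hl'0 x) (hg x).1
    have hfg0 : ∀ x, 0 ≤ f x * g x := fun x => mul_nonneg (hf0 x) (hg0 x)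
    have hx0' : 0 < f x0 * g x0 := lt_of_le_of_ne (hfg0 x0) (Ne.symm hx0)
    have hsum : 0 < ∑ x, f x * g x :=
      lt_of_lt_of_le hx0' (Finset.single_le_sum (fun x _ => hfg0 x) (Finset.mem_univ x0))
    exact ⟨div_nonneg (hfg0 xi) hsum.le,
      (div_le_one hsum).2 (Finset.single_le_sum (fun x _ => hfg0 x) (Finset.mem_univ xi))⟩
  have hSbdd_below : BddBelow S := ⟨0, fun r hr => (hS01 r hr).1⟩
  have hSbdd_above : BddAbove S := ⟨1, fun r hr => (hS01 r hr).2⟩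
  -- membership: for each xj with A xj > 0, a xj xi / A xj ∈ S
  have hmem : ∀ xj, 0 < A xj → a xj xi / A xj ∈ S := by
    intro xj hAj
    set SJ := ∑ x', ψJ (x', xj) with hSJ
    set SL := ∑ k', ψL (xj, k') with hSL
    have hSJ0 : 0 < SJ := hJpos xj
    have hSL0 : 0 < SL := hLpos xj
    set f : Xi → ℝ := fun x => ψJ (x, xj) / SJ with hf
    set h : Xk → ℝ := fun k => ψL (xj, k) / SL with hh
    have hhbox : ∀ z, lL z ≤ h z ∧ h z ≤ uL z := fun z => ⟨hlL_le z xj, hle_uL z xj⟩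
    have hhsum : ∑ k, h k = 1 := by
      rw [hh, ← Finset.sum_div, div_self hSL0.ne']
    have hhnz : ∃ z, h z ≠ 0 := by
      by_contra hc
      push_neg at hc
      simp only [hc, Finset.sum_const_zero] at hhsum
      exact one_ne_zero hhsum.symm
    set D := ∑ x', ∑ k, ψK (x', k) * h k with hD
    have hD0 : 0 < D := hDpos h hhbox hhnz
    set g : Xi → ℝ := fun x => (∑ k, ψK (x, k) * h k) / D with hg
    have hgbox : ∀ x, l' x ≤ g x ∧ g x ≤ u' x := by
      intro x
      have hmemT : g x ∈ {r : ℝ | ∃ h : Xk → ℝ,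
          (∀ z, lL z ≤ h z ∧ h z ≤ uL z) ∧ (∃ z, h z ≠ 0) ∧
          r = (∑ xk, ψK (x, xk) * h xk) / ∑ x', ∑ xk, ψK (x', xk) * h xk} :=
        ⟨h, hhbox, hhnz, rfl⟩
      constructor
      · rw [hl']
        exact csInf_le ⟨0, fun r hr => (hT01 x r hr).1⟩ hmemT
      · rw [hu']
        exact le_csSup ⟨1, fun r hr => (hT01 x r hr).2⟩ hmemT
    have e1 : ∀ x, ∑ k, ψK (x, k) * h k = (∑ k, ψK (x, k) * ψL (xj, k)) / SL := by
      intro x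
      rw [Finset.sum_div]
      exact Finset.sum_congr rfl fun k _ => (mul_div_assoc _ _ _).symm
    have e2 : ∀ x, a xj x = ψJ (x, xj) * ∑ k, ψK (x, k) * ψL (xj, k) := by
      intro x
      rw [ha, Finset.mul_sum]
      exact Finset.sum_congr rfl fun k _ => mul_assoc _ _ _
    have hfg : ∀ x, f x * g x = a xj x / (SJ * SL * D) := by
      intro x
      rw [hf, hg]
      simp only
      rw [e1 x, e2 x, div_div, div_mul_div_comm, ← mul_assoc]
    have hc0 : (0:ℝ) < SJ * SL * D := mul_pos (mul_pos hSJ0 hSL0) hD0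
    have hsumfg : ∑ x, f x * g x = A xj / (SJ * SL * D) := by
      rw [hA, Finset.sum_div]
      exact Finset.sum_congr rfl fun x _ => hfg x
    have hexnz : ∃ x, f x * g x ≠ 0 := by
      obtain ⟨x0, hx0⟩ : ∃ x0, a xj x0 ≠ 0 := by
        by_contra hc
        push_neg at hc
        rw [hA] at hAj
        simp only [hc, Finset.sum_const_zero] at hAj
        exact lt_irrefl 0 hAj
      exact ⟨x0, by rw [hfg x0]; exact div_ne_zero hx0 hc0.ne'⟩
    refine ⟨f, g, fun x => ⟨hlJ_le x xj, hle_uJ x xj⟩, hgbox, hexnz, ?_⟩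
    rw [hfg xi, hsumfg]
    rw [div_div_div_cancel_right₀]
    exact hc0.ne' 
  -- now the main bounds
  have hPeq : P xi = (∑ xj, a xj xi) / ∑ xj, A xj := by
    rw [hP, hZ]
  have hZ' : 0 < ∑ xj, A xj := by rw [← hZ]; exact hZpos
  constructor
  · rw [hPeq, le_div_iff₀ hZ', Finset.mul_sum]
    refine Finset.sum_le_sum fun xj _ => ?_
    rcases eq_or_lt_of_le (hA0 xj) with hAj | hAj
    · have : a xj xi = 0 := by
        have := Finset.single_le_sum (fun x _ => ha0 xj x) (Finset.mem_univ xi)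
        rw [hA] at hAj
        have h2 : A xj = 0 := hAj.symm
        nlinarith [ha0 xj xi, this]
      rw [this, ← hAj, mul_zero]
    · have hle := csInf_le hSbdd_below (hmem xj hAj)
      calc sInf S * A xj ≤ (a xj xi / A xj) * A xj :=
            mul_le_mul_of_nonneg_right hle (hA0 xj)
        _ = a xj xi := div_mul_cancel₀ _ hAj.ne'
  · rw [hPeq, div_le_iff₀ hZ', Finset.mul_sum]
    refine Finset.sum_le_sum fun xj _ => ?_
    rcases eq_or_lt_of_le (hA0 xj) with hAj | hAj
    · have : a xj xi = 0 := by
        have := Finset.single_le_sum (fun x _ => ha0 xj x) (Finset.mem_univ xi)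
        nlinarith [ha0 xj xi]
      rw [this, ← hAj, mul_zero]
    · have hle := le_csSup hSbdd_above (hmem xj hAj)
      calc a xj xi = (a xj xi / A xj) * A xj := (div_mul_cancel₀ _ hAj.ne').symm
        _ ≤ sSup S * A xj := mul_le_mul_of_nonneg_right hle (hA0 xj)
end

section
/- (Corrected form of Ihler's dynamic-range bound.) Let X be a finite nonempty type and let p, m : X → ℝ be strictly positive probability distributions on X (i.e., p(x) > 0 and m(x) > 0 for all x, and ∑_x p(x) = ∑_x m(x) = 1). Let δ ≥ 1 and suppose that p(x) m(y) ≤ δ² m(x) p(y) for all x, y ∈ X (i.e., the dynamic range of p/m is at most δ). Then for every x ∈ X: m(x) / (δ² + (1 − δ²) m(x)) ≤ p(x) ≤ δ² m(x) / (1 − (1 − δ²) m(x)). -/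
/-- Corrected form of Ihler's dynamic-range bound: if the dynamic range of `p/m`
is at most `δ`, then `m x / (δ² + (1 − δ²) m x) ≤ p x ≤ δ² m x / (1 − (1 − δ²) m x)`. -/
theorem stmt_14 {X : Type*} [Fintype X] [Nonempty X]
    (p m : X → ℝ)
    (hp : ∀ x, 0 < p x) (hm : ∀ x, 0 < m x)
    (hpsum : ∑ x, p x = 1) (hmsum : ∑ x, m x = 1)
    (δ : ℝ) (hδ : 1 ≤ δ)
    (hdr : ∀ x y, p x * m y ≤ δ ^ 2 * (m x * p y)) :
    ∀ x, m x / (δ ^ 2 + (1 - δ ^ 2) * m x) ≤ p x ∧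
      p x ≤ δ ^ 2 * m x / (1 - (1 - δ ^ 2) * m x) := by
  classical
  intro x
  have hδ2 : (1:ℝ) ≤ δ ^ 2 := by nlinarith
  have hmx1 : m x ≤ 1 :=
    hmsum ▸ Finset.single_le_sum (fun i _ => (hm i).le) (Finset.mem_univ x)
  have hpx1 : p x ≤ 1 :=
    hpsum ▸ Finset.single_le_sum (fun i _ => (hp i).le) (Finset.mem_univ x)
  have hsum_m : ∑ y ∈ Finset.univ.erase x, m y = 1 - m x := by
    rw [Finset.sum_erase_eq_sub (Finset.mem_univ x), hmsum]
  have hsum_p : ∑ y ∈ Finset.univ.erase x, p y = 1 - p x := by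
    rw [Finset.sum_erase_eq_sub (Finset.mem_univ x), hpsum]
  have h1 : p x * (1 - m x) ≤ δ ^ 2 * (m x * (1 - p x)) := by
    have h := Finset.sum_le_sum (s := Finset.univ.erase x) (fun y _ => hdr x y)
    rw [← Finset.mul_sum, ← Finset.mul_sum, ← Finset.mul_sum, hsum_m, hsum_p] at h
    exact h
  have h2 : (1 - p x) * m x ≤ δ ^ 2 * ((1 - m x) * p x) := by
    have h := Finset.sum_le_sum (s := Finset.univ.erase x) (fun y _ => hdr y x)
    rw [← Finset.sum_mul, ← Finset.mul_sum, ← Finset.sum_mul, hsum_m, hsum_p] at h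
    exact h
  have hD1 : 0 < δ ^ 2 + (1 - δ ^ 2) * m x := by nlinarith [hm x]
  have hD2 : 0 < 1 - (1 - δ ^ 2) * m x := by nlinarith [hm x]
  constructor
  · rw [div_le_iff₀ hD1]
    nlinarith
  · rw [le_div_iff₀ hD2]
    nlinarith
end

section
/- (Variable-replication step of the self-avoiding-walk-tree bound.) Let X and Y be finite nonempty types, let n ≥ 1, let ψ_1, …, ψ_n : X × Y → ℝ be nonnegative, and let Φ : Y → ℝ be nonnegative. Suppose that for every j ∈ {1,…,n} and every (x_k)_{k≠j} ∈ X^{n−1}, ∑_{x_j ∈ X} ∑_{y ∈ Y} Φ(y) ∏_{k=1}^n ψ_k(x_k, y) > 0, and that ∑_{x∈X} ∑_{y∈Y} Φ(y) ∏_{j=1}^n ψ_j(x, y) > 0. For each j, define l_j, u_j : X → ℝ as the pointwise infimum and supremum, over all nonzero factorized measures g on X^{n−1} (with coordinates indexed by k ≠ j), of the normalization of the function x ↦ ∑_{(x_k)_{k≠j}} ∑_{y} Φ(y) ψ_j(x, y) (∏_{k≠j} ψ_k(x_k, y)) g((x_k)_{k≠j}). Let P : X → ℝ be the normalization of x ↦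 ∑_{y} Φ(y) ∏_{j=1}^n ψ_j(x, y). Then for every x ∈ X, P(x) lies between the infimum and the supremum of N(φ_1 ⋯ φ_n)(x) over all tuples of functions φ_j : X → ℝ with l_j ≤ φ_j ≤ u_j pointwise for each j and with the pointwise product φ_1 ⋯ φ_n nonzero, where N denotes normalization. -/
/-!
Let `T m x` be the weight `∑ y, Φ y * ∏ k, c k` with `c k = ψ k (x, y)` for the first `m`
replicas and `c k = ∑ w, ψ k (w, y)` for the others. Pinning the replicas `k < j` at `x` is a
factorized measure on the replicas `k ≠ j`, so `φ j x = T (j + 1) x / T j x` is one of the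
normalized cavity values and lies in the box `[l j x, u j x]`. The product of the `φ j x`
telescopes to `T n x / T 0 x`, and `T 0` does not depend on `x`, so normalizing `∏ j, φ j`
gives exactly the marginal. As `T` is antitone in `m`, `T 0 > 0`, and a vanishing `T j` forces
`T n` to vanish, so the telescoping survives the convention `a / 0 = 0`. Since `l ≥ 0`, all the normalized box products lie in `[0, 1]`,
so the marginal lies between their infimum and supremum.
-/

open Finset

lemma prod_range_div₀ {G₀ : Type*} [CommGroupWithZero G₀] (f : ℕ → G₀)
    (h0 : f 0 ≠ 0) (hf : ∀ m, f m = 0 → f (m + 1) = 0) (n : ℕ) :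
    ∏ i ∈ range n, f (i + 1) / f i = f n / f 0 := by
  induction n with
  | zero => simp [h0]
  | succ m ih =>
    rw [prod_range_succ, ih]
    by_cases hm : f m = 0
    · simp [hm, hf m hm]
    · rw [div_mul_div_comm, mul_comm (f m), mul_div_mul_right _ _ hm]

lemma div_sum_mem_Icc {ι : Type*} [Fintype ι] {w : ι → ℝ} (hw : ∀ i, 0 ≤ w i) (i : ι) :
    w i / ∑ j, w j ∈ Set.Icc 0 1 :=
  ⟨div_nonneg (hw i) (sum_nonneg fun j _ => hw j),
    div_le_one_of_le₀ (single_le_sum (fun j _ => hw j) (mem_univ i)) (sum_nonneg fun j _ => hw j)⟩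

lemma sum_pi_mul_prod_mul_prod {ι X : Type*} [Fintype ι] [DecidableEq ι] [Fintype X] (c : ℝ)
    (ψ gs : ι → X → ℝ) :
    ∑ xs : ι → X, c * (∏ k, ψ k (xs k)) * ∏ k, gs k (xs k) = c * ∏ k, ∑ w, ψ k w * gs k w := by
  simp_rw [mul_assoc, ← prod_mul_distrib, ← mul_sum, Fintype.prod_sum]

section Replication

variable {X Y : Type*} [Fintype X] [Fintype Y] {n : ℕ} (ψ : Fin n → X × Y → ℝ) (Φ : Y → ℝ)

def cavityRatios (j : Fin n) (x : X) : Set ℝ :=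
  {r : ℝ | ∃ g : ({k : Fin n // k ≠ j} → X) → ℝ,
    (∃ gs : {k : Fin n // k ≠ j} → X → ℝ,
      (∀ k z, 0 ≤ gs k z) ∧ g = fun xs => ∏ k, gs k (xs k)) ∧
    (∃ xs, 0 < g xs) ∧
    r = (∑ xs : {k : Fin n // k ≠ j} → X, ∑ y : Y,
          Φ y * ψ j (x, y) * (∏ k : {k : Fin n // k ≠ j}, ψ k.1 (xs k, y)) * g xs)
        / ∑ x' : X, ∑ xs : {k : Fin n // k ≠ j} → X, ∑ y : Y,
          Φ y * ψ j (x', y) * (∏ k : {k : Fin n // k ≠ j}, ψ k.1 (xs k, y)) * g xs}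

def boxRatios (l u : Fin n → X → ℝ) (x : X) : Set ℝ :=
  {r : ℝ | ∃ φ : Fin n → X → ℝ,
    (∀ j z, l j z ≤ φ j z ∧ φ j z ≤ u j z) ∧
    (∃ z, (∏ j, φ j z) ≠ 0) ∧
    r = (∏ j, φ j x) / ∑ z, ∏ j, φ j z}

/-- The replicas `k < m` of the variable are pinned to `x`, the others are summed out. -/
def pinnedWeight (m : ℕ) (x : X) : ℝ :=
  ∑ y, Φ y * ∏ k : Fin n, if (k : ℕ) < m then ψ k (x, y) else ∑ w, ψ k (w, y)

/-- The point mass at `z` on the replicas `k < j`, the counting measure on the replicas `k > j`. -/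
def pinIndicator [DecidableEq X] (j : Fin n) (z : X) (k : {k : Fin n // k ≠ j}) (w : X) : ℝ :=
  if (k.1 : ℕ) < j ∧ w ≠ z then 0 else 1

variable {ψ Φ}

lemma cavityRatios_nonneg (hψ : ∀ j z, 0 ≤ ψ j z) (hΦ : ∀ y, 0 ≤ Φ y) {j : Fin n} {x : X}
    {r : ℝ} (hr : r ∈ cavityRatios ψ Φ j x) : 0 ≤ r := by
  obtain ⟨g, ⟨gs, hgs, rfl⟩, -, rfl⟩ := hr
  have hnum : ∀ x', 0 ≤ ∑ xs : {k : Fin n // k ≠ j} → X, ∑ y : Y,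
      Φ y * ψ j (x', y) * (∏ k : {k : Fin n // k ≠ j}, ψ k.1 (xs k, y)) *
        ∏ k, gs k (xs k) := fun x' =>
    sum_nonneg fun xs _ => sum_nonneg fun y _ =>
      mul_nonneg (mul_nonneg (mul_nonneg (hΦ y) (hψ j _)) (prod_nonneg fun k _ => hψ k.1 _))
        (prod_nonneg fun k _ => hgs k _)
  exact div_nonneg (hnum x) (sum_nonneg fun x' _ => hnum x')

lemma nonneg_of_isGLB_cavityRatios (hψ : ∀ j z, 0 ≤ ψ j z) (hΦ : ∀ y, 0 ≤ Φ y) {j : Fin n}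
    {x : X} {a : ℝ} (ha : IsGLB (cavityRatios ψ Φ j x) a) : 0 ≤ a :=
  ha.2 fun _ hr => cavityRatios_nonneg hψ hΦ hr

lemma boxRatios_subset_Icc {l u : Fin n → X → ℝ} (hl : ∀ j z, 0 ≤ l j z) (x : X) :
    boxRatios l u x ⊆ Set.Icc 0 1 := by
  rintro _ ⟨φ, hφ, -, rfl⟩
  exact div_sum_mem_Icc (fun z => prod_nonneg fun j _ => (hl j z).trans (hφ j z).1) x

lemma pinnedWeight_nonneg (hψ : ∀ j z, 0 ≤ ψ j z) (hΦ : ∀ y, 0 ≤ Φ y) (m : ℕ) (x : X) :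
    0 ≤ pinnedWeight ψ Φ m x :=
  sum_nonneg fun y _ => mul_nonneg (hΦ y) <| prod_nonneg fun k _ => by
    split_ifs
    exacts [hψ k _, sum_nonneg fun w _ => hψ k _]

lemma pinnedWeight_succ_le (hψ : ∀ j z, 0 ≤ ψ j z) (hΦ : ∀ y, 0 ≤ Φ y) (m : ℕ) (x : X) :
    pinnedWeight ψ Φ (m + 1) x ≤ pinnedWeight ψ Φ m x := by
  refine sum_le_sum fun y _ => mul_le_mul_of_nonneg_left ?_ (hΦ y)
  refine prod_le_prod (fun k _ => ?_) fun k _ => ?_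
  · split_ifs
    exacts [hψ k _, sum_nonneg fun w _ => hψ k _]
  · split_ifs
    · exact le_rfl
    · exact single_le_sum (fun w _ => hψ k (w, y)) (mem_univ x)
    · omega
    · exact le_rfl

lemma pinnedWeight_zero_eq (x x' : X) : pinnedWeight ψ Φ 0 x = pinnedWeight ψ Φ 0 x' := by
  simp [pinnedWeight]

lemma pinnedWeight_self (x : X) : pinnedWeight ψ Φ n x = ∑ y, Φ y * ∏ j, ψ j (x, y) := by
  simp [pinnedWeight]

lemma cavityNumerator_pinIndicator [DecidableEq X] (j : Fin n) (z x : X) :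
    ∑ xs : {k : Fin n // k ≠ j} → X, ∑ y : Y,
        Φ y * ψ j (x, y) * (∏ k : {k : Fin n // k ≠ j}, ψ k.1 (xs k, y)) *
          ∏ k, pinIndicator j z k (xs k)
      = ∑ y, Φ y * ψ j (x, y) * ∏ k : {k : Fin n // k ≠ j},
          if (k.1 : ℕ) < j then ψ k.1 (z, y) else ∑ w, ψ k.1 (w, y) := by
  rw [sum_comm]
  refine sum_congr rfl fun y _ => ?_
  refine (sum_pi_mul_prod_mul_prod _ (fun (k : {k : Fin n // k ≠ j}) w => ψ k.1 (w, y)) _).trans ?_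
  congr 1
  refine prod_congr rfl fun k _ => ?_
  by_cases hk : (k.1 : ℕ) < j <;> simp [pinIndicator, hk]

lemma pinnedWeight_eq_sum_mul_prod_ne (j : Fin n) {m : ℕ} (hm : m = j ∨ m = j + 1) (x : X) :
    pinnedWeight ψ Φ m x = ∑ y, Φ y * (if (j : ℕ) < m then ψ j (x, y) else ∑ w, ψ j (w, y)) *
      ∏ k : {k : Fin n // k ≠ j}, if (k.1 : ℕ) < j then ψ k.1 (x, y) else ∑ w, ψ k.1 (w, y) := by
  refine sum_congr rfl fun y _ => ?_
  rw [Fintype.prod_eq_mul_prod_subtype_ne _ j, mul_assoc]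
  congr 3
  ext k
  have : (k.1 : ℕ) ≠ j := Fin.val_ne_of_ne k.2
  have : (k.1 : ℕ) < m ↔ (k.1 : ℕ) < j := by omega
  simp only [this]

lemma pinnedWeight_succ_eq_sum (j : Fin n) (x : X) :
    pinnedWeight ψ Φ (j + 1) x = ∑ y, Φ y * ψ j (x, y) *
      ∏ k : {k : Fin n // k ≠ j}, if (k.1 : ℕ) < j then ψ k.1 (x, y) else ∑ w, ψ k.1 (w, y) := by
  simp [pinnedWeight_eq_sum_mul_prod_ne j (Or.inr rfl)]

lemma pinnedWeight_eq_sum_sum (j : Fin n) (x : X) :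
    pinnedWeight ψ Φ j x = ∑ x', ∑ y, Φ y * ψ j (x', y) *
      ∏ k : {k : Fin n // k ≠ j}, if (k.1 : ℕ) < j then ψ k.1 (x, y) else ∑ w, ψ k.1 (w, y) := by
  simp_rw [pinnedWeight_eq_sum_mul_prod_ne j (Or.inl rfl), lt_irrefl, if_false, mul_sum, sum_mul]
  exact sum_comm

lemma pinnedWeight_div_mem_cavityRatios (j : Fin n) (x : X) :
    pinnedWeight ψ Φ (j + 1) x / pinnedWeight ψ Φ j x ∈ cavityRatios ψ Φ j x := by
  classical
  refine ⟨_, ⟨pinIndicator j x, fun k w => ?_, rfl⟩, ⟨fun _ => x, ?_⟩, ?_⟩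
  · unfold pinIndicator; split_ifs <;> norm_num
  · simp [pinIndicator]
  · simp_rw [cavityNumerator_pinIndicator, pinnedWeight_succ_eq_sum, pinnedWeight_eq_sum_sum]

lemma prod_pinnedWeight_div (hψ : ∀ j z, 0 ≤ ψ j z) (hΦ : ∀ y, 0 ≤ Φ y) {x : X}
    (h0 : pinnedWeight ψ Φ 0 x ≠ 0) :
    ∏ j : Fin n, pinnedWeight ψ Φ (j + 1) x / pinnedWeight ψ Φ j x
      = pinnedWeight ψ Φ n x / pinnedWeight ψ Φ 0 x := by
  rw [Fin.prod_univ_eq_prod_range (fun i => pinnedWeight ψ Φ (i + 1) x / pinnedWeight ψ Φ i x)]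
  refine prod_range_div₀ (fun m => pinnedWeight ψ Φ m x) h0 (fun m hm => ?_) n
  exact le_antisymm (hm ▸ pinnedWeight_succ_le hψ hΦ m x) (pinnedWeight_nonneg hψ hΦ _ x)

lemma exists_pinnedWeight_self_pos (hpos : 0 < ∑ x : X, ∑ y : Y, Φ y * ∏ j, ψ j (x, y)) :
    ∃ x, 0 < pinnedWeight ψ Φ n x := by
  simp_rw [pinnedWeight_self]
  obtain ⟨x, -, hx⟩ := exists_lt_of_sum_lt (s := univ) (f := 0)
    (g := fun x => ∑ y, Φ y * ∏ j, ψ j (x, y)) (by simpa using hpos)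
  exact ⟨x, hx⟩

lemma pinnedWeight_zero_pos (hψ : ∀ j z, 0 ≤ ψ j z) (hΦ : ∀ y, 0 ≤ Φ y)
    (hpos : 0 < ∑ x : X, ∑ y : Y, Φ y * ∏ j, ψ j (x, y)) (x : X) :
    0 < pinnedWeight ψ Φ 0 x := by
  obtain ⟨z, hz⟩ := exists_pinnedWeight_self_pos hpos
  have hanti : Antitone fun m => pinnedWeight ψ Φ m z :=
    antitone_nat_of_succ_le fun m => pinnedWeight_succ_le hψ hΦ m z
  calc 0 < pinnedWeight ψ Φ n z := hz
    _ ≤ pinnedWeight ψ Φ 0 z := hanti (Nat.zero_le n)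
    _ = pinnedWeight ψ Φ 0 x := pinnedWeight_zero_eq z x

lemma marginal_mem_boxRatios (hψ : ∀ j z, 0 ≤ ψ j z) (hΦ : ∀ y, 0 ≤ Φ y)
    (hpos : 0 < ∑ x : X, ∑ y : Y, Φ y * ∏ j, ψ j (x, y)) {l u : Fin n → X → ℝ}
    (hl : ∀ j x, l j x ∈ lowerBounds (cavityRatios ψ Φ j x))
    (hu : ∀ j x, u j x ∈ upperBounds (cavityRatios ψ Φ j x)) (x : X) :
    (∑ y : Y, Φ y * ∏ j, ψ j (x, y)) / (∑ x' : X, ∑ y : Y, Φ y * ∏ j, ψ j (x', y))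
      ∈ boxRatios l u x := by
  have h0 : 0 < pinnedWeight ψ Φ 0 x := pinnedWeight_zero_pos hψ hΦ hpos x
  have hprod : ∀ z, ∏ j : Fin n, pinnedWeight ψ Φ (j + 1) z / pinnedWeight ψ Φ j z
      = pinnedWeight ψ Φ n z / pinnedWeight ψ Φ 0 x := fun z => by
    rw [prod_pinnedWeight_div hψ hΦ, pinnedWeight_zero_eq z x]
    exact (pinnedWeight_zero_pos hψ hΦ hpos z).ne'
  obtain ⟨z, hz⟩ := exists_pinnedWeight_self_pos hpos
  refine ⟨fun j z => pinnedWeight ψ Φ (j + 1) z / pinnedWeight ψ Φ j z,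
    fun j z => ⟨hl j z (pinnedWeight_div_mem_cavityRatios j z),
      hu j z (pinnedWeight_div_mem_cavityRatios j z)⟩, ⟨z, ?_⟩, ?_⟩
  · rw [hprod]
    positivity
  · simp_rw [hprod, ← sum_div, div_div_div_cancel_right₀ h0.ne', pinnedWeight_self]

end Replication

theorem stmt_17_general {X Y : Type*} [Fintype X] [Fintype Y]
    {n : ℕ}
    (ψ : Fin n → X × Y → ℝ) (hψ : ∀ j z, 0 ≤ ψ j z)
    (Φ : Y → ℝ) (hΦ : ∀ y, 0 ≤ Φ y)
    (hpos' : 0 < ∑ x : X, ∑ y : Y, Φ y * ∏ j, ψ j (x, y))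
    (l u : Fin n → X → ℝ)
    (hl : ∀ (j : Fin n) (x : X),
      IsGLB {r : ℝ | ∃ g : ({k : Fin n // k ≠ j} → X) → ℝ,
          (∃ gs : {k : Fin n // k ≠ j} → X → ℝ,
            (∀ k z, 0 ≤ gs k z) ∧ g = fun xs => ∏ k, gs k (xs k)) ∧
          (∃ xs, 0 < g xs) ∧
          r = (∑ xs : {k : Fin n // k ≠ j} → X, ∑ y : Y,
                Φ y * ψ j (x, y) * (∏ k : {k : Fin n // k ≠ j}, ψ k.1 (xs k, y)) * g xs)
              / ∑ x' : X, ∑ xs : {k : Fin n // k ≠ j} → X, ∑ y : Y,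
                Φ y * ψ j (x', y) * (∏ k : {k : Fin n // k ≠ j}, ψ k.1 (xs k, y)) * g xs}
        (l j x))
    (hu : ∀ (j : Fin n) (x : X),
      IsLUB {r : ℝ | ∃ g : ({k : Fin n // k ≠ j} → X) → ℝ,
          (∃ gs : {k : Fin n // k ≠ j} → X → ℝ,
            (∀ k z, 0 ≤ gs k z) ∧ g = fun xs => ∏ k, gs k (xs k)) ∧
          (∃ xs, 0 < g xs) ∧
          r = (∑ xs : {k : Fin n // k ≠ j} → X, ∑ y : Y,
                Φ y * ψ j (x, y) * (∏ k : {k : Fin n // k ≠ j}, ψ k.1 (xs k, y)) * g xs)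
              / ∑ x' : X, ∑ xs : {k : Fin n // k ≠ j} → X, ∑ y : Y,
                Φ y * ψ j (x', y) * (∏ k : {k : Fin n // k ≠ j}, ψ k.1 (xs k, y)) * g xs}
        (u j x)) :
    ∀ x : X,
      sInf {r : ℝ | ∃ φ : Fin n → X → ℝ,
          (∀ j z, l j z ≤ φ j z ∧ φ j z ≤ u j z) ∧
          (∃ z, (∏ j, φ j z) ≠ 0) ∧
          r = (∏ j, φ j x) / ∑ z, ∏ j, φ j z}
        ≤ (∑ y : Y, Φ y * ∏ j, ψ j (x, y))
          / (∑ x' : X, ∑ y : Y, Φ y * ∏ j, ψ j (x', y)) ∧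
      (∑ y : Y, Φ y * ∏ j, ψ j (x, y))
          / (∑ x' : X, ∑ y : Y, Φ y * ∏ j, ψ j (x', y))
        ≤ sSup {r : ℝ | ∃ φ : Fin n → X → ℝ,
          (∀ j z, l j z ≤ φ j z ∧ φ j z ≤ u j z) ∧
          (∃ z, (∏ j, φ j z) ≠ 0) ∧
          r = (∏ j, φ j x) / ∑ z, ∏ j, φ j z} := by
  intro x
  have hmem : _ ∈ boxRatios l u x :=
    marginal_mem_boxRatios hψ hΦ hpos' (fun j x => (hl j x).1) (fun j x => (hu j x).1) x
  have hIcc : boxRatios l u x ⊆ Set.Icc 0 1 :=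
    boxRatios_subset_Icc (fun j z => nonneg_of_isGLB_cavityRatios hψ hΦ (hl j z)) x
  exact ⟨csInf_le (bddBelow_Icc.mono hIcc) hmem, le_csSup (bddAbove_Icc.mono hIcc) hmem⟩

/-- Variable-replication step of the self-avoiding-walk-tree bound: the marginal
`P` of the variable `x` (with neighboring factors `ψ 1, …, ψ n` and cavity term `Φ`)
lies between the extrema of normalized pointwise products `N(φ 1 ⋯ φ n)` where
each `φ j` ranges over the box `B[l j, u j]` and the product is nonzero. -/
theorem stmt_17 {X Y : Type*} [Fintype X] [Nonempty X] [Fintype Y] [Nonempty Y]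
    {n : ℕ} (hn : 1 ≤ n)
    (ψ : Fin n → X × Y → ℝ) (hψ : ∀ j z, 0 ≤ ψ j z)
    (Φ : Y → ℝ) (hΦ : ∀ y, 0 ≤ Φ y)
    (hpos : ∀ (j : Fin n) (xs : {k : Fin n // k ≠ j} → X),
      0 < ∑ xj : X, ∑ y : Y,
        Φ y * (ψ j (xj, y) * ∏ k : {k : Fin n // k ≠ j}, ψ k.1 (xs k, y)))
    (hpos' : 0 < ∑ x : X, ∑ y : Y, Φ y * ∏ j, ψ j (x, y))
    (l u : Fin n → X → ℝ)
    (hl : ∀ (j : Fin n) (x : X),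
      IsGLB {r : ℝ | ∃ g : ({k : Fin n // k ≠ j} → X) → ℝ,
          (∃ gs : {k : Fin n // k ≠ j} → X → ℝ,
            (∀ k z, 0 ≤ gs k z) ∧ g = fun xs => ∏ k, gs k (xs k)) ∧
          (∃ xs, 0 < g xs) ∧
          r = (∑ xs : {k : Fin n // k ≠ j} → X, ∑ y : Y,
                Φ y * ψ j (x, y) * (∏ k : {k : Fin n // k ≠ j}, ψ k.1 (xs k, y)) * g xs)
              / ∑ x' : X, ∑ xs : {k : Fin n // k ≠ j} → X, ∑ y : Y,
                Φ y * ψ j (x', y) * (∏ k : {k : Fin n // k ≠ j}, ψ k.1 (xs k, y)) * g xs}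
        (l j x))
    (hu : ∀ (j : Fin n) (x : X),
      IsLUB {r : ℝ | ∃ g : ({k : Fin n // k ≠ j} → X) → ℝ,
          (∃ gs : {k : Fin n // k ≠ j} → X → ℝ,
            (∀ k z, 0 ≤ gs k z) ∧ g = fun xs => ∏ k, gs k (xs k)) ∧
          (∃ xs, 0 < g xs) ∧
          r = (∑ xs : {k : Fin n // k ≠ j} → X, ∑ y : Y,
                Φ y * ψ j (x, y) * (∏ k : {k : Fin n // k ≠ j}, ψ k.1 (xs k, y)) * g xs)
              / ∑ x' : X, ∑ xs : {k : Fin n // k ≠ j} → X, ∑ y : Y,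
                Φ y * ψ j (x', y) * (∏ k : {k : Fin n // k ≠ j}, ψ k.1 (xs k, y)) * g xs}
        (u j x)) :
    ∀ x : X,
      sInf {r : ℝ | ∃ φ : Fin n → X → ℝ,
          (∀ j z, l j z ≤ φ j z ∧ φ j z ≤ u j z) ∧
          (∃ z, (∏ j, φ j z) ≠ 0) ∧
          r = (∏ j, φ j x) / ∑ z, ∏ j, φ j z}
        ≤ (∑ y : Y, Φ y * ∏ j, ψ j (x, y))
          / (∑ x' : X, ∑ y : Y, Φ y * ∏ j, ψ j (x', y)) ∧
      (∑ y : Y, Φ y * ∏ j, ψ j (x, y))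
          / (∑ x' : X, ∑ y : Y, Φ y * ∏ j, ψ j (x', y))
        ≤ sSup {r : ℝ | ∃ φ : Fin n → X → ℝ,
          (∀ j z, l j z ≤ φ j z ∧ φ j z ≤ u j z) ∧
          (∃ z, (∏ j, φ j z) ≠ 0) ∧
          r = (∏ j, φ j x) / ∑ z, ∏ j, φ j z} :=
  stmt_17_general ψ hψ Φ hΦ hpos' l u hl hu
end
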